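/- arXiv:0908.3330 — 3 statements merged into one kernel-verified Lean document; each statement's English description precedes it below -/
import Mathlib

section
/- Fix k and S ⊆ {1,…,k}, and let f_j(a_1,…,a_k) be the number of (a_1,…,a_k,S)-permutations with no fixed points in blocks A_1,…,A_j. Then for 0 ≤ j < k, f_j(c_1,…,c_k) = Σ_{h=0}^{m_{j+1}} f_{j+1}(c_1,…,c_{j+1}−h,…,c_k), where m_i = 1 if i ∈ S and m_i = c_i if i ∉ S. -/
/-- Apply a permutation of `Fin n` to a natural number (0-based indexing);
indices `≥ n` are left fixed. -/
def appl {n : ℕ} (π : Equiv.Perm (Fin n)) (j : ℕ) : ℕ :=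
  if h : j < n then ((π ⟨j, h⟩ : Fin n) : ℕ) else j

/-- The starting index (0-based) of the `i`-th consecutive block when
`{0,…,n-1}` is partitioned into blocks of sizes `a 0, …, a (k-1)`. -/
def blockStart {k : ℕ} (a : Fin k → ℕ) (i : Fin k) : ℕ := ∑ t ∈ Finset.Iio i, a t

/-- `x` lies in the `i`-th block. -/
def inBlock {k : ℕ} (a : Fin k → ℕ) (i : Fin k) (x : ℕ) : Prop :=
  blockStart a i ≤ x ∧ x < blockStart a i + a i

instance {k : ℕ} (a : Fin k → ℕ) (i : Fin k) : DecidablePred (inBlock a i) := fun x =>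
  inferInstanceAs (Decidable (blockStart a i ≤ x ∧ x < blockStart a i + a i))

/-- An `(a₁,…,a_k,S)`-permutation: a permutation of `{0,…,n-1}` (where `n = ∑ aᵢ`)
that is strictly decreasing on each block `Aᵢ` with `i ∈ S` and strictly
increasing on each block `Aᵢ` with `i ∉ S`. -/
def IsASPerm {k : ℕ} (a : Fin k → ℕ) (S : Finset (Fin k))
    (π : Equiv.Perm (Fin (∑ t, a t))) : Prop :=
  ∀ i : Fin k, ∀ j : ℕ, blockStart a i ≤ j → j + 1 < blockStart a i + a i →
    if i ∈ S then appl π (j + 1) < appl π j else appl π j < appl π (j + 1)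

/-- `f_j(c)`: the number of `(c,S)`-permutations with no fixed points in the
first `j` blocks. -/
noncomputable def fcount (k : ℕ) (S : Finset (Fin k)) (j : ℕ) (c : Fin k → ℕ) : ℕ :=
  Nat.card {π : Equiv.Perm (Fin (∑ t, c t)) //
    IsASPerm c S π ∧ ∀ i : Fin k, (i : ℕ) < j → ∀ x : ℕ, inBlock c i x → appl π x ≠ x}

/-- `f_j` extended to integer block sizes: zero if any block size is negative. -/
noncomputable def fcountZ (k : ℕ) (S : Finset (Fin k)) (j : ℕ) (c : Fin k → ℤ) : ℕ :=
  if ∀ i, 0 ≤ c i then fcount k S j (fun i => (c i).toNat) else 0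

/-!
Sort the permutations counted by `f_j` by the number `h` of fixed points in block `j + 1`.
On a monotone block the displacement `π x - x`, negated on a decreasing block, is monotone, so
the fixed points of the block form an interval sitting at the cut where the displacement
changes sign, and a decreasing block has at most one of them. Deleting these `h` fixed points
and renumbering yields a permutation counted by `f_{j+1}` for the block shortened by `h`;
conversely, inserting `h` fixed points at the cut of such a permutation restores one counted
by `f_j`. Both moves preserve the cut, which makes them mutually inverse. On permutations of `ℕ`
that fix everything beyond `n`, inserting `h` fixed points at `u` is transport along the order
embedding `skip u h` of `ℕ` onto the complement of `[u, u + h)`.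
-/

open Equiv Finset

section Skip

def skip (u h x : ℕ) : ℕ := if x < u then x else x + h

variable {u h : ℕ}

lemma skip_of_lt {x : ℕ} (hx : x < u) : skip u h x = x := if_pos hx

lemma skip_of_le {x : ℕ} (hx : u ≤ x) : skip u h x = x + h := if_neg (not_lt.2 hx)

lemma strictMono_skip : StrictMono (skip u h) := by
  intro x y hxy; unfold skip; split_ifs <;> omega

lemma mem_range_skip {y : ℕ} : y ∈ Set.range (skip u h) ↔ y < u ∨ u + h ≤ y := by
  constructor
  · rintro ⟨x, rfl⟩; unfold skip; split_ifs <;> omega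
  · rintro (hy | hy)
    · exact ⟨y, skip_of_lt hy⟩
    · exact ⟨y - h, by rw [skip_of_le (by omega)]; omega⟩

lemma image_skip_Ico_of_le_left {a b : ℕ} (hb : b ≤ u) :
    skip u h '' Set.Ico a b = Set.Ico a b :=
  Set.image_congr (fun _ hx => skip_of_lt (lt_of_lt_of_le hx.2 hb)) |>.trans (Set.image_id _)

lemma image_skip_Ico_of_le_right {a b : ℕ} (ha : u ≤ a) :
    skip u h '' Set.Ico a b = Set.Ico (a + h) (b + h) := by
  rw [Set.image_congr fun x hx => skip_of_le (le_trans ha hx.1), Set.image_add_const_Ico]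

lemma image_skip_Ici {a : ℕ} (ha : u ≤ a) : skip u h '' Set.Ici a = Set.Ici (a + h) := by
  have hskip : ∀ x ∈ Set.Ici a, skip u h x = x + h := fun x hx => skip_of_le (le_trans ha hx)
  rw [Set.image_congr hskip, Set.image_add_const_Ici]

lemma image_skip_Ico_union {a b : ℕ} (ha : a ≤ u) (hb : u ≤ b) :
    skip u h '' Set.Ico a b ∪ Set.Ico u (u + h) = Set.Ico a (b + h) := by
  ext y
  simp only [Set.mem_union, Set.mem_image, Set.mem_Ico]
  constructor
  · rintro (⟨x, hx, rfl⟩ | hy)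
    · unfold skip; split_ifs <;> omega
    · omega
  · intro hy
    rcases lt_or_ge y u with hyu | hyu
    · exact Or.inl ⟨y, by omega, skip_of_lt hyu⟩
    rcases lt_or_ge y (u + h) with hyh | hyh
    · exact Or.inr ⟨hyu, hyh⟩
    · exact Or.inl ⟨y - h, by omega, by rw [skip_of_le (by omega)]; omega⟩

lemma card_filter_Ico_skip {a b : ℕ} (ha : a ≤ u) (hb : u ≤ b) (R : ℕ → Prop)
    [DecidablePred R] :
    #{y ∈ Finset.Ico a (b + h) | R y} =
      #{x ∈ Finset.Ico a b | R (skip u h x)} + #{y ∈ Finset.Ico u (u + h) | R y} := by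
  have hsplit : Finset.Ico a (b + h) =
      (Finset.Ico a b).map ⟨skip u h, strictMono_skip.injective⟩ ∪ Finset.Ico u (u + h) := by
    apply Finset.coe_injective
    push_cast
    exact (image_skip_Ico_union ha hb).symm
  have hdisj : Disjoint ((Finset.Ico a b).map ⟨skip u h, strictMono_skip.injective⟩)
      (Finset.Ico u (u + h)) := by
    rw [Finset.disjoint_left]
    simp only [Finset.mem_map, Function.Embedding.coeFn_mk, Finset.mem_Ico]
    rintro _ ⟨x, -, rfl⟩
    unfold skip; split_ifs <;> omega
  rw [hsplit, Finset.filter_union, Finset.card_union_of_disjoint (hdisj.mono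
    (Finset.filter_subset _ _) (Finset.filter_subset _ _)), Finset.filter_map, Finset.card_map]
  rfl

end Skip

/-- `insertFixed u h σ` acts on the range of `skip u h` as `σ` does on `ℕ`, and fixes the `h`
points of `[u, u + h)` left out of that range. -/
noncomputable def insertFixed (u h : ℕ) :
    Perm ℕ ≃ {τ : Perm ℕ // ∀ y, y ∉ Set.range (skip u h) → τ y = y} :=
  haveI := Classical.decPred (· ∈ Set.range (skip u h))
  (Equiv.ofInjective _ strictMono_skip.injective).permCongr.trans
    (Perm.subtypeEquivSubtypePerm _)

lemma insertFixed_apply_skip (u h : ℕ) (σ : Perm ℕ) (x : ℕ) :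
    (insertFixed u h σ : Perm ℕ) (skip u h x) = skip u h (σ x) := by
  classical
  change Perm.ofSubtype _ _ = _
  rw [Perm.ofSubtype_apply_of_mem _ (Set.mem_range_self x)]
  simp [permCongr_apply]

section Blocks

variable {k : ℕ}

def block (c : Fin k → ℕ) (i : Fin k) : Set ℕ :=
  Set.Ico (blockStart c i) (blockStart c i + c i)

lemma blockStart_add_self (c : Fin k → ℕ) (i : Fin k) :
    blockStart c i + c i = ∑ t ∈ Finset.Iic i, c t := by
  rw [← Finset.Iio_insert, Finset.sum_insert Finset.notMem_Iio_self, add_comm, blockStart]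

lemma blockStart_add_le_sum (c : Fin k → ℕ) (i : Fin k) :
    blockStart c i + c i ≤ ∑ t, c t := by
  rw [blockStart_add_self]
  exact Finset.sum_le_sum_of_subset (Finset.subset_univ _)

lemma blockStart_add_le_of_lt (c : Fin k → ℕ) {i i' : Fin k} (h : i < i') :
    blockStart c i + c i ≤ blockStart c i' := by
  rw [blockStart_add_self]
  exact Finset.sum_le_sum_of_subset fun _ ht =>
    Finset.mem_Iio.2 (lt_of_le_of_lt (Finset.mem_Iic.1 ht) h)

variable {c : Fin k → ℕ} {jf : Fin k} {h : ℕ}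

lemma sum_update_sub_add {s : Finset (Fin k)} (hs : jf ∈ s) (hh : h ≤ c jf) :
    ∑ t ∈ s, Function.update c jf (c jf - h) t + h = ∑ t ∈ s, c t := by
  rw [Finset.sum_update_of_mem hs, ← Finset.add_sum_erase s c hs, Finset.sdiff_singleton_eq_erase]
  omega

lemma blockStart_update_of_le {v : ℕ} {i : Fin k} (hi : i ≤ jf) :
    blockStart (Function.update c jf v) i = blockStart c i :=
  Finset.sum_congr rfl fun _ ht =>
    Function.update_of_ne (ne_of_lt (lt_of_lt_of_le (Finset.mem_Iio.1 ht) hi)) _ _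

lemma blockStart_update_add_of_lt (hh : h ≤ c jf) {i : Fin k} (hi : jf < i) :
    blockStart (Function.update c jf (c jf - h)) i + h = blockStart c i :=
  sum_update_sub_add (Finset.mem_Iio.2 hi) hh

variable {u : ℕ}

lemma image_skip_block_update_of_ne (hh : h ≤ c jf) (hstart : blockStart c jf ≤ u)
    (hu : u ≤ blockStart c jf + (c jf - h)) {i : Fin k} (hi : i ≠ jf) :
    skip u h '' block (Function.update c jf (c jf - h)) i = block c i := by
  rw [block, Function.update_of_ne hi]
  rcases lt_or_gt_of_ne hi with hlt | hgt
  · rw [blockStart_update_of_le hlt.le, image_skip_Ico_of_le_left]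
    · rfl
    · exact (blockStart_add_le_of_lt c hlt).trans hstart
  · have hle := blockStart_add_le_of_lt (Function.update c jf (c jf - h)) hgt
    rw [blockStart_update_of_le le_rfl, Function.update_self] at hle
    rw [image_skip_Ico_of_le_right (hu.trans hle), block, ← blockStart_update_add_of_lt hh hgt]
    congr 1
    omega

lemma image_skip_block_update_self_union (hh : h ≤ c jf) (hstart : blockStart c jf ≤ u)
    (hu : u ≤ blockStart c jf + (c jf - h)) :
    skip u h '' block (Function.update c jf (c jf - h)) jf ∪ Set.Ico u (u + h) = block c jf := by
  rw [block, blockStart_update_of_le le_rfl, Function.update_self,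
    image_skip_Ico_union hstart hu, block]
  congr 1
  omega

end Blocks

section Direction

variable (anti : Prop) [Decidable anti]

def StrictMonoOrAntiOn (f : ℕ → ℕ) (s : Set ℕ) : Prop :=
  if anti then StrictAntiOn f s else StrictMonoOn f s

/-- The displacement `f x - x`, negated on decreasing blocks so that it is monotone on a block of
either direction. -/
def disp (f : ℕ → ℕ) (x : ℕ) : ℤ := if anti then x - f x else f x - x

variable {anti} {f g : ℕ → ℕ}

lemma disp_eq_zero_iff {x : ℕ} : disp anti f x = 0 ↔ f x = x := by
  unfold disp; split_ifs <;> omega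

lemma disp_neg_iff_of_conj {e : ℕ → ℕ} (he : StrictMono e) {x : ℕ}
    (hfg : g (e x) = e (f x)) :
    disp anti g (e x) < 0 ↔ disp anti f x < 0 := by
  unfold disp
  split_ifs <;> simpa only [sub_neg, Nat.cast_lt, hfg] using he.lt_iff_lt

lemma StrictMonoOrAntiOn.mono {s t : Set ℕ} (hf : StrictMonoOrAntiOn anti f t) (hst : s ⊆ t) :
    StrictMonoOrAntiOn anti f s := by
  unfold StrictMonoOrAntiOn at *
  split_ifs at * <;> exact hf.mono hst

lemma strictMonoOrAntiOn_image_iff {e : ℕ → ℕ} (he : StrictMono e)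
    (hfg : ∀ x, g (e x) = e (f x)) {s : Set ℕ} :
    StrictMonoOrAntiOn anti g (e '' s) ↔ StrictMonoOrAntiOn anti f s := by
  unfold StrictMonoOrAntiOn
  split_ifs <;> refine ⟨fun hg x hx y hy hxy => ?_, ?_⟩
  all_goals first
    | have := hg (Set.mem_image_of_mem e hx) (Set.mem_image_of_mem e hy) (he hxy)
      rwa [hfg, hfg, he.lt_iff_lt] at this
    | rintro hf _ ⟨x, hx, rfl⟩ _ ⟨y, hy, rfl⟩ hxy
      rw [hfg, hfg]
      exact he (hf hx hy (he.lt_iff_lt.1 hxy))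

lemma StrictMonoOrAntiOn.monotoneOn_disp {a b : ℕ}
    (hf : StrictMonoOrAntiOn anti f (Set.Ico a b)) : MonotoneOn (disp anti f) (Set.Ico a b) := by
  refine monotoneOn_of_le_add_one Set.ordConnected_Ico fun x _ hx hx1 => ?_
  unfold StrictMonoOrAntiOn at hf
  unfold disp
  split_ifs at * <;>
  · have := hf hx hx1 (Nat.lt_succ_self x)
    push_cast
    omega

end Direction

section Cut

lemma lt_add_card_filter_iff {P : ℕ → Prop} [DecidablePred P] {a b : ℕ}
    (hP : ∀ x ∈ Set.Ico a b, ∀ y, a ≤ y → y ≤ x → P x → P y) {x : ℕ}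
    (hx : x ∈ Set.Ico a b) :
    x < a + #{y ∈ Finset.Ico a b | P y} ↔ P x := by
  constructor
  · intro hlt
    by_contra hPx
    have hsub : {y ∈ Finset.Ico a b | P y} ⊆ Finset.Ico a x := by
      intro y hy
      rw [Finset.mem_filter, Finset.mem_Ico] at hy
      rw [Finset.mem_Ico]
      refine ⟨hy.1.1, lt_of_not_ge fun hxy => hPx (hP y hy.1 x hx.1 hxy hy.2)⟩
    have := Finset.card_le_card hsub
    rw [Nat.card_Ico] at this
    have := hx.1
    omega
  · intro hPx
    have hsub : Finset.Ico a (x + 1) ⊆ {y ∈ Finset.Ico a b | P y} := by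
      intro y hy
      rw [Finset.mem_Ico] at hy
      rw [Finset.mem_filter, Finset.mem_Ico]
      exact ⟨⟨hy.1, by have := hx.2; omega⟩, hP x hx y hy.1 (by omega) hPx⟩
    have := Finset.card_le_card hsub
    rw [Nat.card_Ico] at this
    have := hx.1
    omega

/-- For monotone `D`, the first point of `[a, a + n)` where `D ≥ 0` (or `a + n` if none). -/
def cut (D : ℕ → ℤ) (a n : ℕ) : ℕ := a + #{x ∈ Finset.Ico a (a + n) | D x < 0}

variable {D : ℕ → ℤ} {a n : ℕ}

lemma le_cut : a ≤ cut D a n := Nat.le_add_right _ _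

lemma card_filter_nonpos (s : Finset ℕ) :
    #{x ∈ s | D x ≤ 0} = #{x ∈ s | D x < 0} + #{x ∈ s | D x = 0} := by
  rw [← Finset.card_union_of_disjoint (Finset.disjoint_filter.2 fun _ _ hlt heq => hlt.ne heq),
    ← Finset.filter_or]
  simp only [le_iff_lt_or_eq]

lemma cut_add_card_eq_zero_le :
    cut D a n + #{x ∈ Finset.Ico a (a + n) | D x = 0} ≤ a + n := by
  have := Finset.card_filter_le (Finset.Ico a (a + n)) (fun x => D x ≤ 0)
  rw [Nat.card_Ico, card_filter_nonpos] at this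
  rw [cut]
  omega

lemma lt_cut_iff (hD : MonotoneOn D (Set.Ico a (a + n))) {x : ℕ} (hx : x ∈ Set.Ico a (a + n)) :
    x < cut D a n ↔ D x < 0 :=
  lt_add_card_filter_iff
    (fun _ hx' _ hy hyx h => (hD ⟨hy, by have := hx'.2; omega⟩ hx' hyx).trans_lt h) hx

lemma eq_zero_iff_mem_Ico_cut (hD : MonotoneOn D (Set.Ico a (a + n))) {x : ℕ}
    (hx : x ∈ Set.Ico a (a + n)) :
    D x = 0 ↔ cut D a n ≤ x ∧ x < cut D a n + #{x ∈ Finset.Ico a (a + n) | D x = 0} := by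
  have hle := lt_add_card_filter_iff (P := fun x => D x ≤ 0)
    (fun _ hx' _ hy hyx h => (hD ⟨hy, by have := hx'.2; omega⟩ hx' hyx).trans h) hx
  rw [card_filter_nonpos, ← add_assoc] at hle
  have hlt := lt_cut_iff hD hx
  rw [cut] at hlt ⊢
  constructor
  · intro h0; exact ⟨not_lt.1 fun h => (hlt.1 h).ne h0, hle.2 h0.le⟩
  · rintro ⟨h1, h2⟩; exact le_antisymm (hle.1 h2) (not_lt.1 fun h => (not_lt.2 h1) (hlt.2 h))

end Cut

section Insert

variable {f g : ℕ → ℕ} {u h : ℕ} {s : Set ℕ}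

lemma strictMonoOn_image_skip_union (hconj : ∀ x, g (skip u h x) = skip u h (f x))
    (hgap : ∀ y ∈ Set.Ico u (u + h), g y = y) (hf : StrictMonoOn f s)
    (hside : ∀ x ∈ s, f x < u ↔ x < u) :
    StrictMonoOn g (skip u h '' s ∪ Set.Ico u (u + h)) := by
  rintro _ (⟨x, hx, rfl⟩ | ⟨hy₁, hy₂⟩) _ (⟨y, hy, rfl⟩ | ⟨hz₁, hz₂⟩) hlt
  · rw [hconj, hconj]
    exact strictMono_skip (hf hx hy (strictMono_skip.lt_iff_lt.1 hlt))
  · have hxu : x < u := by unfold skip at hlt; split_ifs at hlt <;> omega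
    rw [hconj, hgap _ ⟨hz₁, hz₂⟩, skip_of_lt ((hside x hx).2 hxu)]
    exact lt_of_lt_of_le ((hside x hx).2 hxu) hz₁
  · have hyu : u ≤ y := by unfold skip at hlt; split_ifs at hlt <;> omega
    have := (hside y hy).not.2 (not_lt.2 hyu)
    rw [hconj, hgap _ ⟨hy₁, hy₂⟩, skip_of_le (not_lt.1 this)]
    omega
  · rwa [hgap _ ⟨hy₁, hy₂⟩, hgap _ ⟨hz₁, hz₂⟩]

lemma strictAntiOn_image_skip_union (hconj : ∀ x, g (skip u h x) = skip u h (f x))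
    (hgap : ∀ y ∈ Set.Ico u (u + h), g y = y) (hh : h ≤ 1) (hf : StrictAntiOn f s)
    (hside : ∀ x ∈ s, f x < u ↔ u ≤ x) :
    StrictAntiOn g (skip u h '' s ∪ Set.Ico u (u + h)) := by
  rintro _ (⟨x, hx, rfl⟩ | ⟨hy₁, hy₂⟩) _ (⟨y, hy, rfl⟩ | ⟨hz₁, hz₂⟩) hlt
  · rw [hconj, hconj]
    exact strictMono_skip (hf hx hy (strictMono_skip.lt_iff_lt.1 hlt))
  · have hxu : x < u := by unfold skip at hlt; split_ifs at hlt <;> omega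
    have := (hside x hx).not.2 (not_le.2 hxu)
    rw [hconj, hgap _ ⟨hz₁, hz₂⟩, skip_of_le (not_lt.1 this)]
    omega
  · have hyu : u ≤ y := by unfold skip at hlt; split_ifs at hlt <;> omega
    rw [hconj, hgap _ ⟨hy₁, hy₂⟩, skip_of_lt ((hside y hy).2 hyu)]
    exact lt_of_lt_of_le ((hside y hy).2 hyu) hy₁
  · omega

end Insert

section BlockCut

variable {k : ℕ} (c : Fin k → ℕ) (S : Finset (Fin k)) (i : Fin k) (f : ℕ → ℕ)

def fixCount : ℕ := #{x ∈ Finset.Ico (blockStart c i) (blockStart c i + c i) | f x = x}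

def blockCut : ℕ := cut (disp (i ∈ S) f) (blockStart c i) (c i)

variable {c S i f}

lemma card_disp_eq_zero :
    #{x ∈ Finset.Ico (blockStart c i) (blockStart c i + c i) | disp (i ∈ S) f x = 0} =
      fixCount c i f := by
  simp only [disp_eq_zero_iff, fixCount]

lemma fixCount_eq_zero_iff : fixCount c i f = 0 ↔ ∀ x ∈ block c i, f x ≠ x := by
  simp only [fixCount, Finset.card_eq_zero, Finset.filter_eq_empty_iff, Finset.mem_Ico]
  rfl

lemma blockCut_add_fixCount_le : blockCut c S i f + fixCount c i f ≤ blockStart c i + c i :=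
  card_disp_eq_zero (S := S) ▸ cut_add_card_eq_zero_le

lemma fixCount_le : fixCount c i f ≤ c i := by
  simpa [fixCount] using
    Finset.card_filter_le (Finset.Ico (blockStart c i) (blockStart c i + c i)) fun x => f x = x

lemma fixCount_le_ite (hf : StrictMonoOrAntiOn (i ∈ S) f (block c i)) :
    fixCount c i f ≤ if i ∈ S then 1 else c i := by
  unfold StrictMonoOrAntiOn at hf
  split_ifs at hf ⊢
  · refine Finset.card_le_one.2 fun x hx y hy => ?_
    simp only [Finset.mem_filter, Finset.mem_Ico] at hx hy
    by_contra hne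
    rcases lt_or_gt_of_ne hne with hlt | hlt
    · have := hf hx.1 hy.1 hlt; omega
    · have := hf hy.1 hx.1 hlt; omega
  · exact fixCount_le

lemma eq_iff_mem_Ico_blockCut (hf : StrictMonoOrAntiOn (i ∈ S) f (block c i)) {x : ℕ}
    (hx : x ∈ block c i) :
    f x = x ↔ blockCut c S i f ≤ x ∧ x < blockCut c S i f + fixCount c i f := by
  rw [← disp_eq_zero_iff (anti := i ∈ S), ← card_disp_eq_zero]
  exact eq_zero_iff_mem_Ico_cut hf.monotoneOn_disp hx

lemma StrictMonoOn.lt_blockCut_iff (hS : i ∉ S) (hf : StrictMonoOn f (block c i))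
    (hfix : ∀ x ∈ block c i, f x ≠ x) {x : ℕ} (hx : x ∈ block c i) :
    f x < blockCut c S i f ↔ x < blockCut c S i f := by
  have hmono : StrictMonoOrAntiOn (i ∈ S) f (block c i) := by
    rwa [StrictMonoOrAntiOn, if_neg hS]
  have hcut := lt_cut_iff hmono.monotoneOn_disp hx
  have hfx := hfix x hx
  rw [disp, if_neg hS] at hcut
  rw [blockCut]
  omega

/-- With `u` the cut: before it the values are `≥ f (u - 1) > u - 1`, after it `≤ f u < u`. -/
lemma StrictAntiOn.lt_blockCut_iff (hS : i ∈ S) (hf : StrictAntiOn f (block c i))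
    (hfix : ∀ x ∈ block c i, f x ≠ x) {x : ℕ} (hx : x ∈ block c i) :
    f x < blockCut c S i f ↔ blockCut c S i f ≤ x := by
  have hmono : StrictMonoOrAntiOn (i ∈ S) f (block c i) := by
    rwa [StrictMonoOrAntiOn, if_pos hS]
  have hcut : ∀ y ∈ block c i, y < blockCut c S i f ↔ (y : ℤ) - f y < 0 := fun y hy => by
    rw [blockCut, lt_cut_iff hmono.monotoneOn_disp hy, disp, if_pos hS]
  have hle : blockCut c S i f ≤ blockStart c i + c i :=
    (Nat.le_add_right _ _).trans blockCut_add_fixCount_le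
  have hfx := hfix x hx
  have hx' := hcut x hx
  constructor
  · intro hlt
    by_contra hxu
    have hu : blockCut c S i f - 1 ∈ block c i := ⟨by have := hx.1; omega, by omega⟩
    have := (hcut _ hu).1 (by omega)
    have := hf.antitoneOn hx hu (by omega)
    omega
  · intro hux
    have hu : blockCut c S i f ∈ block c i := ⟨le_cut, by have := hx.2; omega⟩
    have := (hcut _ hu).not.1 (lt_irrefl _)
    have := hfix _ hu
    have := hf.antitoneOn hu hx hux
    omega

lemma StrictMonoOrAntiOn.image_skip_union (hf : StrictMonoOrAntiOn (i ∈ S) f (block c i))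
    {g : ℕ → ℕ} {h : ℕ}
    (hconj : ∀ x, g (skip (blockCut c S i f) h x) = skip (blockCut c S i f) h (f x))
    (hgap : ∀ y ∈ Set.Ico (blockCut c S i f) (blockCut c S i f + h), g y = y)
    (hfix : ∀ x ∈ block c i, f x ≠ x) (hh : i ∈ S → h ≤ 1) :
    StrictMonoOrAntiOn (i ∈ S) g
      (skip (blockCut c S i f) h '' block c i ∪
        Set.Ico (blockCut c S i f) (blockCut c S i f + h)) := by
  unfold StrictMonoOrAntiOn at hf ⊢
  split_ifs at hf ⊢ with hS
  · exact strictAntiOn_image_skip_union hconj hgap (hh hS) hf fun x hx =>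
      hf.lt_blockCut_iff hS hfix hx
  · exact strictMonoOn_image_skip_union hconj hgap hf fun x hx => hf.lt_blockCut_iff hS hfix hx

end BlockCut

/-- The condition counted by `fcount`, for the extension `appl π` of `π` to all of `ℕ`. -/
def IsFixFreeASPerm {k : ℕ} (c : Fin k → ℕ) (S : Finset (Fin k)) (j : ℕ) (f : ℕ → ℕ) :
    Prop :=
  (∀ x ∈ Set.Ici (∑ t, c t), f x = x) ∧
    (∀ i, StrictMonoOrAntiOn (i ∈ S) f (block c i)) ∧
    ∀ i : Fin k, (i : ℕ) < j → ∀ x ∈ block c i, f x ≠ x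

section Transfer

variable {k : ℕ} {c : Fin k → ℕ} {S : Finset (Fin k)} {jf : Fin k} {h u : ℕ}
  {f g : ℕ → ℕ}

lemma forall_Ici_sum_update_iff (hh : h ≤ c jf) (hconj : ∀ x, g (skip u h x) = skip u h (f x))
    (hu : u ≤ blockStart c jf + (c jf - h)) :
    (∀ x ∈ Set.Ici (∑ t, Function.update c jf (c jf - h) t), f x = x) ↔
      ∀ y ∈ Set.Ici (∑ t, c t), g y = y := by
  have hle := blockStart_add_le_sum (Function.update c jf (c jf - h)) jf
  rw [blockStart_update_of_le le_rfl, Function.update_self] at hle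
  rw [← sum_update_sub_add (Finset.mem_univ jf) hh, ← image_skip_Ici (hu.trans hle),
    Set.forall_mem_image]
  simp only [hconj, strictMono_skip.injective.eq_iff]

lemma strictMonoOrAntiOn_block_update_iff (hh : h ≤ c jf)
    (hconj : ∀ x, g (skip u h x) = skip u h (f x)) (hstart : blockStart c jf ≤ u)
    (hu : u ≤ blockStart c jf + (c jf - h)) {i : Fin k} (hi : i ≠ jf) :
    StrictMonoOrAntiOn (i ∈ S) f (block (Function.update c jf (c jf - h)) i) ↔
      StrictMonoOrAntiOn (i ∈ S) g (block c i) := by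
  rw [← image_skip_block_update_of_ne hh hstart hu hi,
    strictMonoOrAntiOn_image_iff strictMono_skip hconj]

lemma forall_block_update_ne_iff (hh : h ≤ c jf) (hconj : ∀ x, g (skip u h x) = skip u h (f x))
    (hstart : blockStart c jf ≤ u) (hu : u ≤ blockStart c jf + (c jf - h)) {i : Fin k}
    (hi : i ≠ jf) :
    (∀ x ∈ block (Function.update c jf (c jf - h)) i, f x ≠ x) ↔
      ∀ y ∈ block c i, g y ≠ y := by
  rw [← image_skip_block_update_of_ne hh hstart hu hi, Set.forall_mem_image]
  simp only [hconj, strictMono_skip.injective.ne_iff]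

lemma card_filter_block_update (hh : h ≤ c jf) (hstart : blockStart c jf ≤ u)
    (hu : u ≤ blockStart c jf + (c jf - h)) (R : ℕ → Prop) [DecidablePred R] :
    #{y ∈ Finset.Ico (blockStart c jf) (blockStart c jf + c jf) | R y} =
      #{x ∈ Finset.Ico (blockStart (Function.update c jf (c jf - h)) jf)
          (blockStart (Function.update c jf (c jf - h)) jf +
            Function.update c jf (c jf - h) jf) | R (skip u h x)} +
        #{y ∈ Finset.Ico u (u + h) | R y} := by
  rw [blockStart_update_of_le le_rfl, Function.update_self, ← card_filter_Ico_skip hstart hu]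
  congr 3
  omega

lemma fixCount_eq_fixCount_update_add (hh : h ≤ c jf)
    (hconj : ∀ x, g (skip u h x) = skip u h (f x)) (hgap : ∀ y ∈ Set.Ico u (u + h), g y = y)
    (hstart : blockStart c jf ≤ u) (hu : u ≤ blockStart c jf + (c jf - h)) :
    fixCount c jf g = fixCount (Function.update c jf (c jf - h)) jf f + h := by
  have hgap' : #{y ∈ Finset.Ico u (u + h) | g y = y} = h := by
    rw [Finset.filter_true_of_mem fun y hy => hgap y (by simpa using hy), Nat.card_Ico,
      Nat.add_sub_cancel_left]
  rw [fixCount, card_filter_block_update hh hstart hu, hgap', fixCount]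
  simp only [hconj, strictMono_skip.injective.eq_iff]

lemma blockCut_eq_blockCut_update (hh : h ≤ c jf)
    (hconj : ∀ x, g (skip u h x) = skip u h (f x)) (hgap : ∀ y ∈ Set.Ico u (u + h), g y = y)
    (hstart : blockStart c jf ≤ u) (hu : u ≤ blockStart c jf + (c jf - h)) :
    blockCut c S jf g = blockCut (Function.update c jf (c jf - h)) S jf f := by
  have hgap' : #{y ∈ Finset.Ico u (u + h) | disp (jf ∈ S) g y < 0} = 0 := by
    rw [Finset.card_eq_zero, Finset.filter_eq_empty_iff]
    intro y hy
    rw [disp_eq_zero_iff.2 (hgap y (by simpa using hy))]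
    exact lt_irrefl 0
  rw [blockCut, cut, card_filter_block_update hh hstart hu, hgap', add_zero, blockCut, cut,
    blockStart_update_of_le le_rfl]
  simp only [disp_neg_iff_of_conj strictMono_skip (hconj _)]

lemma isFixFreeASPerm_update_iff (hh : h ≤ c jf) (hS : jf ∈ S → h ≤ 1)
    (hconj : ∀ x, g (skip u h x) = skip u h (f x)) (hgap : ∀ y ∈ Set.Ico u (u + h), g y = y) :
    IsFixFreeASPerm (Function.update c jf (c jf - h)) S (jf + 1) f ∧
        blockCut (Function.update c jf (c jf - h)) S jf f = u ↔
      IsFixFreeASPerm c S jf g ∧ fixCount c jf g = h ∧ blockCut c S jf g = u := by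
  constructor
  · rintro ⟨⟨hsupp, hmono, hfix⟩, rfl⟩
    have hstart : blockStart c jf ≤ blockCut (Function.update c jf (c jf - h)) S jf f :=
      blockStart_update_of_le (v := c jf - h) le_rfl ▸ le_cut
    have hu : blockCut (Function.update c jf (c jf - h)) S jf f ≤
        blockStart c jf + (c jf - h) := by
      have := blockCut_add_fixCount_le (c := Function.update c jf (c jf - h)) (S := S) (i := jf)
        (f := f)
      rw [blockStart_update_of_le le_rfl, Function.update_self] at this
      omega
    have hfix_jf := hfix jf (Nat.lt_succ_self _)
    refine ⟨⟨(forall_Ici_sum_update_iff hh hconj hu).1 hsupp, fun i => ?_, fun i hi => ?_⟩,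
      ?_, blockCut_eq_blockCut_update hh hconj hgap hstart hu⟩
    · rcases eq_or_ne i jf with rfl | hi
      · rw [← image_skip_block_update_self_union hh hstart hu]
        exact (hmono i).image_skip_union hconj hgap hfix_jf hS
      · exact (strictMonoOrAntiOn_block_update_iff hh hconj hstart hu hi).1 (hmono i)
    · exact (forall_block_update_ne_iff hh hconj hstart hu (Fin.ne_of_lt hi)).1
        (hfix i (by omega))
    · rw [fixCount_eq_fixCount_update_add hh hconj hgap hstart hu,
        fixCount_eq_zero_iff.2 hfix_jf, zero_add]
  · rintro ⟨⟨hsupp, hmono, hfix⟩, hcount, rfl⟩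
    have hstart : blockStart c jf ≤ blockCut c S jf g := le_cut
    have hu : blockCut c S jf g ≤ blockStart c jf + (c jf - h) := by
      have := blockCut_add_fixCount_le (c := c) (S := S) (i := jf) (f := g)
      omega
    refine ⟨⟨(forall_Ici_sum_update_iff hh hconj hu).2 hsupp, fun i => ?_, fun i hi => ?_⟩,
      (blockCut_eq_blockCut_update hh hconj hgap hstart hu).symm⟩
    · rcases eq_or_ne i jf with rfl | hi
      · rw [← strictMonoOrAntiOn_image_iff strictMono_skip hconj]
        exact (hmono i).mono
          (image_skip_block_update_self_union hh hstart hu ▸ Set.subset_union_left)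
      · exact (strictMonoOrAntiOn_block_update_iff hh hconj hstart hu hi).2 (hmono i)
    · rcases eq_or_ne i jf with rfl | hne
      · have := fixCount_eq_fixCount_update_add hh hconj hgap hstart hu
        exact fixCount_eq_zero_iff.1 (by omega)
      · exact (forall_block_update_ne_iff hh hconj hstart hu hne).2
          (hfix i (by have := Fin.val_ne_of_ne hne; omega))

end Transfer

section Counting

lemma finite_subtype_and_left {α : Type*} {P Q : α → Prop} [Finite {a // P a}] :
    Finite {a // P a ∧ Q a} :=
  Finite.of_injective (fun a => (⟨a.1, a.2.1⟩ : {a // P a})) fun _ _ hab =>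
    Subtype.ext (Subtype.mk.inj hab)

lemma card_subtype_eq_sum_card_fiber {α : Type*} {P : α → Prop} [Finite {a // P a}]
    (F : α → ℕ) (m : ℕ) (hF : ∀ a, P a → F a ≤ m) :
    Nat.card {a // P a} = ∑ h ∈ Finset.range (m + 1), Nat.card {a // P a ∧ F a = h} := by
  classical
  have := Fintype.ofFinite {a // P a}
  rw [Nat.card_eq_fintype_card, ← Finset.card_univ, Finset.card_eq_sum_card_fiberwise
    (f := fun a => F a.1) fun a _ => Finset.mem_range_succ_iff.2 (hF a.1 a.2)]
  refine Finset.sum_congr rfl fun h _ => ?_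
  rw [← Fintype.card_subtype, ← Nat.card_eq_fintype_card]
  exact Nat.card_congr (Equiv.subtypeSubtypeEquivSubtypeInter P (F · = h))

def natPermEquiv (n : ℕ) : Perm (Fin n) ≃ {σ : Perm ℕ // ∀ x, ¬ x < n → σ x = x} :=
  Fin.equivSubtype.permCongr.trans (Perm.subtypeEquivSubtypePerm _)

lemma natPermEquiv_apply {n : ℕ} (π : Perm (Fin n)) (x : ℕ) :
    (natPermEquiv n π : Perm ℕ) x = appl π x := by
  by_cases hx : x < n
  · rw [appl, dif_pos hx]
    exact Perm.subtypeEquivSubtypePerm_apply_of_mem (p := (· < n)) _ hx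
  · rw [appl, dif_neg hx]
    exact Perm.subtypeEquivSubtypePerm_apply_of_not_mem (p := (· < n)) _ hx

end Counting

section Fcount

variable {k : ℕ} {c : Fin k → ℕ} {S : Finset (Fin k)}

lemma isASPerm_iff {π : Perm (Fin (∑ t, c t))} :
    IsASPerm c S π ↔ ∀ i, StrictMonoOrAntiOn (i ∈ S) (appl π) (block c i) := by
  refine forall_congr' fun i => ?_
  unfold StrictMonoOrAntiOn
  split_ifs
  · refine ⟨fun h => strictAntiOn_of_add_one_lt Set.ordConnected_Ico fun x _ hx hx1 =>
      h x hx.1 hx1.2, fun h x hx hx1 => ?_⟩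
    exact h ⟨hx, by omega⟩ ⟨by omega, hx1⟩ (Nat.lt_succ_self x)
  · refine ⟨fun h => strictMonoOn_of_lt_add_one Set.ordConnected_Ico fun x _ hx hx1 =>
      h x hx.1 hx1.2, fun h x hx hx1 => ?_⟩
    exact h ⟨hx, by omega⟩ ⟨by omega, hx1⟩ (Nat.lt_succ_self x)

def fixFreeASPermEquiv (j : ℕ) :
    {π : Perm (Fin (∑ t, c t)) //
        IsASPerm c S π ∧
          ∀ i : Fin k, (i : ℕ) < j → ∀ x : ℕ, inBlock c i x → appl π x ≠ x} ≃
      {σ : Perm ℕ // IsFixFreeASPerm c S j σ} :=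
  (Equiv.subtypeEquiv (natPermEquiv _) fun π => by
      rw [show ⇑(natPermEquiv _ π : Perm ℕ) = appl π from funext (natPermEquiv_apply π),
        isASPerm_iff]
      exact ⟨fun h => ⟨fun _ hx => dif_neg (not_lt.2 hx), h⟩, fun h => h.2⟩).trans
    (Equiv.subtypeSubtypeEquivSubtype fun h x hx => h.1 x (not_lt.1 hx))

lemma fcount_eq_card (j : ℕ) :
    fcount k S j c = Nat.card {σ : Perm ℕ // IsFixFreeASPerm c S j σ} :=
  Nat.card_congr (fixFreeASPermEquiv j)

instance (j : ℕ) : Finite {σ : Perm ℕ // IsFixFreeASPerm c S j σ} :=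
  Finite.of_equiv _ (fixFreeASPermEquiv j)

end Fcount

section Recursion

variable {k : ℕ} {c : Fin k → ℕ} {S : Finset (Fin k)} {jf : Fin k} {h : ℕ}

lemma blockCut_le_sum {i : Fin k} {f : ℕ → ℕ} : blockCut c S i f ≤ ∑ t, c t :=
  (Nat.le_add_right _ _).trans (blockCut_add_fixCount_le.trans (blockStart_add_le_sum c i))

lemma eq_of_notMem_range_skip {u : ℕ} {τ : Perm ℕ}
    (hτ : (IsFixFreeASPerm c S jf τ ∧ fixCount c jf τ = h) ∧ blockCut c S jf τ = u) :
    ∀ y, y ∉ Set.range (skip u h) → τ y = y := by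
  obtain ⟨⟨⟨-, hmono, -⟩, rfl⟩, rfl⟩ := hτ
  intro y hy
  rw [mem_range_skip] at hy
  have hle := blockCut_add_fixCount_le (c := c) (S := S) (i := jf) (f := τ)
  have hstart : blockStart c jf ≤ blockCut c S jf τ := le_cut
  exact (eq_iff_mem_Ico_blockCut (hmono jf) ⟨by omega, by omega⟩).2 (by omega)

lemma card_update_blockCut_eq (hh : h ≤ c jf) (hS : jf ∈ S → h ≤ 1) (u : ℕ) :
    Nat.card {σ : Perm ℕ // IsFixFreeASPerm (Function.update c jf (c jf - h)) S (jf + 1) σ ∧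
        blockCut (Function.update c jf (c jf - h)) S jf σ = u} =
      Nat.card {τ : Perm ℕ //
        (IsFixFreeASPerm c S jf τ ∧ fixCount c jf τ = h) ∧ blockCut c S jf τ = u} :=
  Nat.card_congr <| (Equiv.subtypeEquiv (insertFixed u h) fun σ =>
      (isFixFreeASPerm_update_iff hh hS (insertFixed_apply_skip u h σ) fun y hy =>
        (insertFixed u h σ).2 y (by rw [mem_range_skip]; have := hy.1; have := hy.2; omega)).trans
      and_assoc.symm).trans
    (Equiv.subtypeSubtypeEquivSubtype eq_of_notMem_range_skip)

lemma card_fixCount_eq_card_update (hh : h ≤ c jf) (hS : jf ∈ S → h ≤ 1) :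
    Nat.card {τ : Perm ℕ // IsFixFreeASPerm c S jf τ ∧ fixCount c jf τ = h} =
      Nat.card {σ : Perm ℕ //
        IsFixFreeASPerm (Function.update c jf (c jf - h)) S (jf + 1) σ} := by
  have := finite_subtype_and_left (P := fun τ : Perm ℕ => IsFixFreeASPerm c S jf τ)
    (Q := (fixCount c jf · = h))
  have hsum := sum_update_sub_add (Finset.mem_univ jf) hh
  rw [card_subtype_eq_sum_card_fiber (fun τ : Perm ℕ => blockCut c S jf τ) (∑ t, c t)
      fun _ _ => blockCut_le_sum,
    card_subtype_eq_sum_card_fiber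
      (fun σ : Perm ℕ => blockCut (Function.update c jf (c jf - h)) S jf σ)
      (∑ t, c t) fun _ _ => blockCut_le_sum.trans (by omega)]
  exact Finset.sum_congr rfl fun u _ => (card_update_blockCut_eq hh hS u).symm

lemma fcountZ_update_of_le (hh : h ≤ c jf) (j : ℕ) :
    fcountZ k S j (Function.update (fun i => (c i : ℤ)) jf ((c jf : ℤ) - h)) =
      fcount k S j (Function.update c jf (c jf - h)) := by
  rw [fcountZ, if_pos fun i => ?_]
  · congr 1
    funext i
    rcases eq_or_ne i jf with rfl | hi
    · simp only [Function.update_self]; omega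
    · simp only [Function.update_of_ne hi, Int.toNat_natCast]
  · rcases eq_or_ne i jf with rfl | hi
    · simp only [Function.update_self]; omega
    · simp only [Function.update_of_ne hi, Nat.cast_nonneg]

lemma fcountZ_update_of_lt (hh : c jf < h) (j : ℕ) :
    fcountZ k S j (Function.update (fun i => (c i : ℤ)) jf ((c jf : ℤ) - h)) = 0 :=
  if_neg fun hc => by have := hc jf; simp only [Function.update_self] at this; omega

end Recursion

/-- The recursion `f_j(c) = ∑_{h=0}^{m_{j+1}} f_{j+1}(c₁,…,c_{j+1}-h,…,c_k)`,
where `m_i = 1` if `i ∈ S` and `m_i = c_i` if `i ∉ S` (blocks indexed from 0). -/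
theorem fcount_recursion (k : ℕ) (S : Finset (Fin k)) (j : ℕ) (hj : j < k)
    (c : Fin k → ℕ) :
    fcount k S j c =
      ∑ h ∈ Finset.range ((if (⟨j, hj⟩ : Fin k) ∈ S then 1 else c ⟨j, hj⟩) + 1),
        fcountZ k S (j + 1)
          (Function.update (fun i => (c i : ℤ)) ⟨j, hj⟩ ((c ⟨j, hj⟩ : ℤ) - h)) := by
  set jf : Fin k := ⟨j, hj⟩
  rw [fcount_eq_card, card_subtype_eq_sum_card_fiber (fun σ : Perm ℕ => fixCount c jf σ) _
    fun σ hσ => fixCount_le_ite (hσ.2.1 jf)]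
  refine Finset.sum_congr rfl fun h hh => ?_
  rcases le_or_gt h (c jf) with hc | hc
  · rw [fcountZ_update_of_le hc, fcount_eq_card]
    refine card_fixCount_eq_card_update hc fun hS => ?_
    simpa only [if_pos hS, Finset.mem_range_succ_iff] using hh
  · rw [fcountZ_update_of_lt hc, Nat.card_eq_zero]
    exact Or.inl ⟨fun σ => (fixCount_le.trans_lt hc).ne σ.2.2⟩
end

section
/- If a permutation π is strictly decreasing on a block A_i, then there is a bijection between (a_1,…,a_i,…,a_k,S)-permutations with exactly one fixed point in A_i and (a_1,…,a_i−1,…,a_k,S)-permutations with no fixed points in A_i (where i ∈ S). -/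
/-- The number of fixed points of `π` lying in block `i`. -/
noncomputable def fixInBlock {k : ℕ} (a : Fin k → ℕ) (i : Fin k)
    (π : Equiv.Perm (Fin (∑ t, a t))) : ℕ :=
  Nat.card {x : ℕ // inBlock a i x ∧ appl π x = x}

open Function Set
open scoped Finset

namespace BlockPerm

/-- The `ℕ`-analogue of `Fin.succAbove`: the order isomorphism from `ℕ` onto `ℕ \ {f}`,
inverted on `ℕ \ {f}` by `predAbove f`. -/
def succAbove (f j : ℕ) : ℕ := if j < f then j else j + 1

def predAbove (f x : ℕ) : ℕ := if f < x then x - 1 else x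

section SuccAbove

variable {f j x : ℕ}

lemma succAbove_of_lt (h : j < f) : succAbove f j = j := if_pos h

lemma succAbove_of_le (h : f ≤ j) : succAbove f j = j + 1 := if_neg (not_lt.2 h)

lemma succAbove_ne (f j : ℕ) : succAbove f j ≠ f := by
  unfold succAbove; split_ifs <;> omega

lemma predAbove_succAbove (f j : ℕ) : predAbove f (succAbove f j) = j := by
  unfold predAbove succAbove; split_ifs <;> omega

lemma succAbove_predAbove (h : x ≠ f) : succAbove f (predAbove f x) = x := by
  unfold predAbove succAbove; split_ifs <;> omega

lemma succAbove_strictMono (f : ℕ) : StrictMono (succAbove f) := fun _ _ _ => by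
  unfold succAbove; split_ifs <;> omega

lemma predAbove_strictMonoOn (f : ℕ) : StrictMonoOn (predAbove f) {f}ᶜ := fun x hx y hy _ => by
  simp only [mem_compl_iff, mem_singleton_iff] at hx hy
  unfold predAbove; split_ifs <;> omega

end SuccAbove

def removeFixed (f : ℕ) (g : ℕ → ℕ) : ℕ → ℕ := predAbove f ∘ g ∘ succAbove f

def insertFixed (f : ℕ) (g : ℕ → ℕ) (x : ℕ) : ℕ :=
  if x = f then f else succAbove f (g (predAbove f x))

section InsertRemove

variable {f x n : ℕ} {g : ℕ → ℕ}

lemma insertFixed_self : insertFixed f g f = f := if_pos rfl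

lemma insertFixed_of_lt (h : x < f) : insertFixed f g x = succAbove f (g x) := by
  rw [insertFixed, if_neg h.ne, predAbove, if_neg h.not_gt]

lemma insertFixed_of_gt (h : f < x) : insertFixed f g x = succAbove f (g (x - 1)) := by
  rw [insertFixed, if_neg h.ne', predAbove, if_pos h]

lemma removeFixed_insertFixed : removeFixed f (insertFixed f g) = g := by
  ext j
  simp [removeFixed, insertFixed, succAbove_ne, predAbove_succAbove]

lemma insertFixed_removeFixed (hg : Injective g) (hf : g f = f) :
    insertFixed f (removeFixed f g) = g := by
  ext x
  unfold insertFixed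
  split_ifs with hx
  · rw [hx, hf]
  · simp [removeFixed, succAbove_predAbove hx,
      succAbove_predAbove ((hg.ne_iff' hf).2 hx)]

lemma removeFixed_injective (hg : Injective g) (hf : g f = f) : Injective (removeFixed f g) :=
  fun x y h => (succAbove_strictMono f).injective <| hg <| (predAbove_strictMonoOn f).injOn
    ((hg.ne_iff' hf).2 (succAbove_ne f x))
    ((hg.ne_iff' hf).2 (succAbove_ne f y)) h

lemma insertFixed_injective (hg : Injective g) : Injective (insertFixed f g) := by
  intro x y h
  unfold insertFixed at h
  split_ifs at h with hx hy hy
  · rw [hx, hy]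
  · exact absurd h.symm (succAbove_ne f _)
  · exact absurd h (succAbove_ne f _)
  · exact (predAbove_strictMonoOn f).injOn hx hy (hg ((succAbove_strictMono f).injective h))

lemma removeFixed_eq_self (hf : f ≤ n) (hg : ∀ y, n + 1 ≤ y → g y = y) (hx : n ≤ x) :
    removeFixed f g x = x := by
  rw [removeFixed, comp_apply, comp_apply, succAbove_of_le (hf.trans hx), hg _ (by omega),
    predAbove, if_pos (by omega), Nat.add_sub_cancel]

lemma insertFixed_eq_self (hf : f ≤ n) (hg : ∀ y, n ≤ y → g y = y) (hx : n + 1 ≤ x) :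
    insertFixed f g x = x := by
  rw [insertFixed_of_gt (by omega), hg _ (by omega), succAbove_of_le (by omega)]
  omega

lemma strictMonoOn_removeFixed {s t : Set ℕ} (hg : StrictMonoOn g s) (hg' : Injective g)
    (hf : g f = f) (hs : MapsTo (succAbove f) t s) : StrictMonoOn (removeFixed f g) t :=
  (predAbove_strictMonoOn f).comp (hg.comp ((succAbove_strictMono f).strictMonoOn _) hs)
    fun x _ => (hg'.ne_iff' hf).2 (succAbove_ne f x)

lemma strictAntiOn_removeFixed {s t : Set ℕ} (hg : StrictAntiOn g s) (hg' : Injective g)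
    (hf : g f = f) (hs : MapsTo (succAbove f) t s) : StrictAntiOn (removeFixed f g) t :=
  (predAbove_strictMonoOn f).comp_strictAntiOn
    (hg.comp_strictMonoOn ((succAbove_strictMono f).strictMonoOn _) hs)
    fun x _ => (hg'.ne_iff' hf).2 (succAbove_ne f x)

lemma eqOn_insertFixed {s : Set ℕ} (hf : f ∉ s) :
    EqOn (succAbove f ∘ g ∘ predAbove f) (insertFixed f g) s :=
  fun _ hx => (if_neg (ne_of_mem_of_not_mem hx hf)).symm

lemma strictMonoOn_insertFixed {s t : Set ℕ} (hg : StrictMonoOn g t)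
    (hs : MapsTo (predAbove f) s t) (hf : f ∉ s) : StrictMonoOn (insertFixed f g) s :=
  (((succAbove_strictMono f).strictMonoOn univ).comp
    (hg.comp ((predAbove_strictMonoOn f).mono fun _ hx => ne_of_mem_of_not_mem hx hf) hs)
    (mapsTo_univ _ _)).congr (eqOn_insertFixed hf)

lemma strictAntiOn_insertFixed {s t : Set ℕ} (hg : StrictAntiOn g t)
    (hs : MapsTo (predAbove f) s t) (hf : f ∉ s) : StrictAntiOn (insertFixed f g) s :=
  (((succAbove_strictMono f).strictMonoOn univ).comp_strictAntiOn
    (hg.comp_strictMonoOn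
      ((predAbove_strictMonoOn f).mono fun _ hx => ne_of_mem_of_not_mem hx hf) hs)
    (mapsTo_univ _ _)).congr (eqOn_insertFixed hf)

end InsertRemove

def IsCut (g : ℕ → ℕ) (lo hi f : ℕ) : Prop :=
  f ∈ Icc lo hi ∧ (∀ x ∈ Ico lo f, f ≤ g x) ∧ ∀ x ∈ Ico f hi, g x < f

def cutPoint (g : ℕ → ℕ) (lo hi : ℕ) : ℕ := lo + #{x ∈ Finset.Ico lo hi | x < g x}

section Cut

variable {g : ℕ → ℕ} {lo hi f x : ℕ}

lemma cutPoint_eq (hf : f ∈ Icc lo hi) (h : ∀ x ∈ Ico lo hi, x < g x ↔ x < f) :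
    cutPoint g lo hi = f := by
  have hfilter : {x ∈ Finset.Ico lo hi | x < g x} = Finset.Ico lo f := by
    ext x
    simp only [Finset.mem_filter, Finset.mem_Ico]
    constructor
    · rintro ⟨hx, hgx⟩
      exact ⟨hx.1, (h x hx).1 hgx⟩
    · rintro ⟨hlo, hxf⟩
      have hx : x ∈ Ico lo hi := ⟨hlo, hxf.trans_le hf.2⟩
      exact ⟨hx, (h x hx).2 hxf⟩
  rw [cutPoint, hfilter, Nat.card_Ico]
  exact Nat.add_sub_of_le hf.1

lemma IsCut.cutPoint_eq (h : IsCut g lo hi f) : cutPoint g lo hi = f :=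
  BlockPerm.cutPoint_eq h.1 fun x hx => by
    rcases lt_or_ge x f with hxf | hxf
    · have := h.2.1 x ⟨hx.1, hxf⟩
      omega
    · have := h.2.2 x ⟨hxf, hx.2⟩
      omega

lemma IsCut.apply_ne (h : IsCut g lo hi f) (hx : x ∈ Ico lo hi) : g x ≠ x := by
  rcases lt_or_ge x f with hxf | hxf
  · have := h.2.1 x ⟨hx.1, hxf⟩
    omega
  · have := h.2.2 x ⟨hxf, hx.2⟩
    omega

lemma cutPoint_eq_of_strictAntiOn (hg : StrictAntiOn g (Ico lo hi)) (hf : f ∈ Ico lo hi)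
    (hfix : g f = f) : cutPoint g lo hi = f :=
  BlockPerm.cutPoint_eq ⟨hf.1, hf.2.le⟩ fun x hx => by
    rcases lt_trichotomy x f with hxf | rfl | hxf
    · have := hg hx hf hxf
      omega
    · omega
    · have := hg hf hx hxf
      omega

lemma exists_isCut (hlo : lo ≤ hi) (hg : AntitoneOn g (Ico lo hi))
    (hfix : ∀ x ∈ Ico lo hi, g x ≠ x) : ∃ f, IsCut g lo hi f := by
  classical
  have below : ∀ m ≤ hi, (∀ y ∈ Ico lo m, y < g y) → ∀ x ∈ Ico lo m, m ≤ g x := by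
    intro m hm hy x ⟨hx1, hx2⟩
    have hm1 : m - 1 ∈ Ico lo m := ⟨by omega, by omega⟩
    have h1 := hy _ hm1
    have h2 := hg ⟨hx1, by omega⟩ ⟨hm1.1, by omega⟩ (show x ≤ m - 1 by omega)
    omega
  by_cases hex : ∃ x, x ∈ Ico lo hi ∧ g x < x
  · obtain ⟨hf, hgf⟩ := Nat.find_spec hex
    have hmin : ∀ y ∈ Ico lo (Nat.find hex), y < g y := fun y hy => by
      have := Nat.find_min hex hy.2
      have := hfix y ⟨hy.1, hy.2.trans hf.2⟩
      grind
    refine ⟨Nat.find hex, ⟨hf.1, hf.2.le⟩, below _ hf.2.le hmin, fun x hx => ?_⟩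
    exact (hg hf ⟨hf.1.trans hx.1, hx.2⟩ hx.1).trans_lt hgf
  · have hmin : ∀ y ∈ Ico lo hi, y < g y := fun y hy => by
      have := hfix y hy
      grind
    exact ⟨hi, ⟨hlo, le_rfl⟩, below hi le_rfl hmin, fun x hx => absurd hx.2 (not_lt.2 hx.1)⟩

lemma isCut_cutPoint (hlo : lo ≤ hi) (hg : AntitoneOn g (Ico lo hi))
    (hfix : ∀ x ∈ Ico lo hi, g x ≠ x) : IsCut g lo hi (cutPoint g lo hi) := by
  obtain ⟨f, hf⟩ := exists_isCut hlo hg hfix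
  rwa [hf.cutPoint_eq]

lemma isCut_removeFixed (hg : StrictAntiOn g (Ico lo (hi + 1))) (hf : f ∈ Ico lo (hi + 1))
    (hfix : g f = f) : IsCut (removeFixed f g) lo hi f := by
  have ⟨hf1, hf2⟩ := hf
  refine ⟨⟨hf1, by omega⟩, fun x ⟨hx1, hx2⟩ => ?_, fun x ⟨hx1, hx2⟩ => ?_⟩
  · have := hg ⟨hx1, by omega⟩ hf hx2
    rw [removeFixed, comp_apply, comp_apply, succAbove_of_lt hx2, predAbove, if_pos (by omega)]
    omega
  · have := hg hf ⟨by omega, by omega⟩ (by omega : f < x + 1)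
    rw [removeFixed, comp_apply, comp_apply, succAbove_of_le hx1, predAbove, if_neg (by omega)]
    omega

lemma strictAntiOn_insertFixed_of_isCut (hg : StrictAntiOn g (Ico lo hi))
    (hcut : IsCut g lo hi f) : StrictAntiOn (insertFixed f g) (Ico lo (hi + 1)) := by
  obtain ⟨⟨hflo, hfhi⟩, below, above⟩ := hcut
  refine strictAntiOn_of_add_one_lt ordConnected_Ico fun x _ hx hx1 => ?_
  obtain ⟨hxlo, -⟩ := hx
  obtain ⟨-, hxhi⟩ := hx1
  rcases lt_trichotomy (x + 1) f with h | h | h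
  · have h1 := hg ⟨hxlo, by omega⟩ ⟨by omega, by omega⟩ (lt_add_one x)
    have h2 := below (x + 1) ⟨by omega, h⟩
    rw [insertFixed_of_lt h, insertFixed_of_lt (by omega), succAbove_of_le h2,
      succAbove_of_le (h2.trans h1.le)]
    omega
  · have h1 := below x ⟨hxlo, by omega⟩
    rw [h, insertFixed_self, ← h, insertFixed_of_lt (lt_add_one x), succAbove_of_le (h ▸ h1)]
    omega
  · have h1 := above x ⟨by omega, by omega⟩
    rw [insertFixed_of_gt h, Nat.add_sub_cancel, succAbove_of_lt h1]
    rcases (Nat.le_of_lt_succ h).eq_or_lt with rfl | hxf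
    · rwa [insertFixed_self]
    · have h2 := above (x - 1) ⟨by omega, by omega⟩
      rw [insertFixed_of_gt hxf, succAbove_of_lt h2]
      exact hg ⟨by omega, by omega⟩ ⟨by omega, by omega⟩ (by omega)

end Cut

section Perm

variable {n m : ℕ}

lemma appl_of_lt (π : Equiv.Perm (Fin n)) {x : ℕ} (hx : x < n) : appl π x = π ⟨x, hx⟩ :=
  dif_pos hx

lemma appl_of_le (π : Equiv.Perm (Fin n)) {x : ℕ} (hx : n ≤ x) : appl π x = x :=
  dif_neg (not_lt.2 hx)

lemma appl_inv_appl (π : Equiv.Perm (Fin n)) (x : ℕ) : appl π⁻¹ (appl π x) = x := by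
  unfold appl
  split_ifs <;> simp_all

lemma appl_injective (π : Equiv.Perm (Fin n)) : Injective (appl π) :=
  LeftInverse.injective (appl_inv_appl π)

lemma eq_of_appl_eq {π σ : Equiv.Perm (Fin n)} (h : appl π = appl σ) : π = σ :=
  Equiv.ext fun x => Fin.ext <| by simpa [appl_of_lt _ x.isLt] using congrFun h x

noncomputable def permOfInjective (n : ℕ) (g : ℕ → ℕ) (hg : Injective g)
    (hfix : ∀ x, n ≤ x → g x = x) : Equiv.Perm (Fin n) :=
  have hlt (x : Fin n) : g x < n := by
    by_contra h
    have := hg (hfix _ (not_lt.1 h))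
    omega
  Equiv.ofBijective (fun x => ⟨g x, hlt x⟩) <| Finite.injective_iff_bijective.1 fun x y h =>
    Fin.ext (hg (Fin.mk.inj h))

lemma appl_permOfInjective (g : ℕ → ℕ) (hg : Injective g)
    (hfix : ∀ x, n ≤ x → g x = x) : appl (permOfInjective n g hg hfix) = g := by
  ext x
  rcases lt_or_ge x n with hx | hx
  · rw [appl_of_lt _ hx]
    rfl
  · rw [appl_of_le _ hx, hfix x hx]

/-- The conjugation map `ψ`, deleting the fixed point `f` of `π`. -/
noncomputable def removePerm (hn : n = m + 1) {f : ℕ} (hf : f < n) (π : Equiv.Perm (Fin n))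
    (hfix : appl π f = f) : Equiv.Perm (Fin m) :=
  permOfInjective m (removeFixed f (appl π)) (removeFixed_injective (appl_injective π) hfix)
    fun _ => removeFixed_eq_self (by omega) fun _ hy => appl_of_le π (by omega)

noncomputable def insertPerm (hn : n = m + 1) {f : ℕ} (hf : f < n) (σ : Equiv.Perm (Fin m)) :
    Equiv.Perm (Fin n) :=
  permOfInjective n (insertFixed f (appl σ)) (insertFixed_injective (appl_injective σ))
    fun _ hx => insertFixed_eq_self (by omega) (fun _ => appl_of_le σ) (by omega)

lemma appl_removePerm (hn : n = m + 1) {f : ℕ} (hf : f < n) (π : Equiv.Perm (Fin n))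
    (hfix : appl π f = f) :
    appl (removePerm hn hf π hfix) = removeFixed f (appl π) :=
  appl_permOfInjective ..

lemma appl_insertPerm (hn : n = m + 1) {f : ℕ} (hf : f < n) (σ : Equiv.Perm (Fin m)) :
    appl (insertPerm hn hf σ) = insertFixed f (appl σ) :=
  appl_permOfInjective ..

lemma insertPerm_removePerm (hn : n = m + 1) {f f' : ℕ} (hf : f < n) (hf' : f' < n)
    (π : Equiv.Perm (Fin n)) (hfix : appl π f = f) (h : f' = f) :
    insertPerm hn hf' (removePerm hn hf π hfix) = π := by
  subst h
  apply eq_of_appl_eq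
  rw [appl_insertPerm, appl_removePerm, insertFixed_removeFixed (appl_injective π) hfix]

lemma removePerm_insertPerm (hn : n = m + 1) {f f' : ℕ} (hf : f < n) (hf' : f' < n)
    (σ : Equiv.Perm (Fin m)) (hfix : appl (insertPerm hn hf σ) f' = f') (h : f' = f) :
    removePerm hn hf' (insertPerm hn hf σ) hfix = σ := by
  subst h
  apply eq_of_appl_eq
  rw [appl_removePerm, appl_insertPerm, removeFixed_insertFixed]

end Perm

section Block

variable {k : ℕ} {a : Fin k → ℕ} {S : Finset (Fin k)}

def block (a : Fin k → ℕ) (t : Fin k) : Set ℕ := Ico (blockStart a t) (blockStart a t + a t)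

lemma blockStart_add_self (a : Fin k → ℕ) (t : Fin k) :
    blockStart a t + a t = ∑ s ∈ Finset.Iic t, a s := by
  rw [blockStart, ← Finset.Iio_insert, Finset.sum_insert Finset.notMem_Iio_self, add_comm]

lemma blockStart_add_le_blockStart {t s : Fin k} (h : t < s) :
    blockStart a t + a t ≤ blockStart a s := by
  rw [blockStart_add_self]
  exact Finset.sum_le_sum_of_subset fun x hx =>
    Finset.mem_Iio.2 ((Finset.mem_Iic.1 hx).trans_lt h)

lemma blockStart_add_le_sum (t : Fin k) : blockStart a t + a t ≤ ∑ s, a s := by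
  rw [blockStart_add_self]
  exact Finset.sum_le_sum_of_subset (Finset.subset_univ _)

lemma lt_sum_of_mem_block {t : Fin k} {x : ℕ} (hx : x ∈ block a t) : x < ∑ s, a s :=
  hx.2.trans_le (blockStart_add_le_sum t)

lemma eq_of_mem_block {t s : Fin k} {x : ℕ} (ht : x ∈ block a t) (hs : x ∈ block a s) :
    t = s := by
  by_contra hne
  rcases lt_or_gt_of_ne hne with h | h
  · have := blockStart_add_le_blockStart (a := a) h
    exact absurd (ht.2.trans_le this) (not_lt.2 hs.1)
  · have := blockStart_add_le_blockStart (a := a) h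
    exact absurd (hs.2.trans_le this) (not_lt.2 ht.1)

lemma isASPerm_iff {π : Equiv.Perm (Fin (∑ t, a t))} :
    IsASPerm a S π ↔ ∀ t, (t ∈ S → StrictAntiOn (appl π) (block a t)) ∧
      (t ∉ S → StrictMonoOn (appl π) (block a t)) := by
  constructor
  · intro h t
    refine ⟨fun ht => strictAntiOn_of_add_one_lt ordConnected_Ico fun j _ hj hj1 => ?_,
      fun ht => strictMonoOn_of_lt_add_one ordConnected_Ico fun j _ hj hj1 => ?_⟩
    · simpa [ht] using h t j hj.1 hj1.2
    · simpa [ht] using h t j hj.1 hj1.2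
  · intro h t j hj hj1
    have hmem : j ∈ block a t := ⟨hj, by omega⟩
    have hmem1 : j + 1 ∈ block a t := ⟨by omega, hj1⟩
    split_ifs with ht
    · exact (h t).1 ht hmem hmem1 (lt_add_one j)
    · exact (h t).2 ht hmem hmem1 (lt_add_one j)

lemma fixInBlock_eq_zero_iff {i : Fin k} {π : Equiv.Perm (Fin (∑ t, a t))} :
    fixInBlock a i π = 0 ↔ ∀ x ∈ block a i, appl π x ≠ x := by
  have : Finite {x : ℕ // inBlock a i x ∧ appl π x = x} :=
    Finite.of_injective (fun x => (⟨x.1, x.2.1.2⟩ : Fin (blockStart a i + a i)))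
      fun x y h => Subtype.ext (Fin.mk.inj h)
  rw [fixInBlock, Finite.card_eq_zero_iff, isEmpty_subtype]
  exact ⟨fun h x hx hfix => h x ⟨hx, hfix⟩, fun h x hx => h x hx.1 hx.2⟩

lemma exists_fixed_of_fixInBlock_eq_one {i : Fin k} {π : Equiv.Perm (Fin (∑ t, a t))}
    (h : fixInBlock a i π = 1) : ∃ x ∈ block a i, appl π x = x := by
  obtain ⟨⟨x, hx, hfix⟩, -⟩ := Nat.card_eq_one_iff_exists.1 h
  exact ⟨x, hx, hfix⟩

lemma fixInBlock_eq_one {i : Fin k} {π : Equiv.Perm (Fin (∑ t, a t))} {x : ℕ}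
    (hx : x ∈ block a i) (hfix : appl π x = x)
    (huniq : ∀ y ∈ block a i, appl π y = y → y = x) : fixInBlock a i π = 1 :=
  Nat.card_eq_one_iff_exists.2 ⟨⟨x, hx, hfix⟩, fun y => Subtype.ext (huniq y y.2.1 y.2.2)⟩

end Block

section Shrink

variable {k m : ℕ} {a : Fin k → ℕ} {i : Fin k}

lemma sum_update_add_one (ha : a i = m + 1) : ∑ t, a t = ∑ t, update a i m t + 1 := by
  classical
  rw [Finset.sum_update_of_mem (Finset.mem_univ i),
    Finset.sum_eq_add_sum_sdiff_singleton_of_mem (Finset.mem_univ i) a, ha]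
  ring

lemma blockStart_update_of_le {t : Fin k} (h : t ≤ i) :
    blockStart (update a i m) t = blockStart a t :=
  Finset.sum_congr rfl fun _ hs => update_of_ne ((Finset.mem_Iio.1 hs).trans_le h).ne _ _

lemma blockStart_update_of_lt (ha : a i = m + 1) {t : Fin k} (h : i < t) :
    blockStart (update a i m) t + 1 = blockStart a t := by
  classical
  rw [blockStart, blockStart, Finset.sum_update_of_mem (Finset.mem_Iio.2 h),
    Finset.sum_eq_add_sum_sdiff_singleton_of_mem (Finset.mem_Iio.2 h) a, ha]
  ring

lemma block_update_self : block (update a i m) i = Ico (blockStart a i) (blockStart a i + m) := by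
  rw [block, blockStart_update_of_le le_rfl, update_self]

lemma block_eq_Ico (ha : a i = m + 1) :
    block a i = Ico (blockStart a i) (blockStart a i + m + 1) := by
  rw [block, ha, add_assoc]

lemma mapsTo_succAbove_block (ha : a i = m + 1) {f : ℕ} (hf : f ∈ block a i) (t : Fin k) :
    MapsTo (succAbove f) (block (update a i m) t) (block a t) := by
  intro x hx
  obtain ⟨hf1, hf2⟩ := hf
  obtain ⟨hx1, hx2⟩ := hx
  rcases lt_trichotomy t i with h | rfl | h
  · have := blockStart_add_le_blockStart (a := a) h
    rw [blockStart_update_of_le h.le] at hx1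
    rw [blockStart_update_of_le h.le, update_of_ne h.ne] at hx2
    rw [succAbove_of_lt (by omega)]
    exact ⟨hx1, hx2⟩
  · rw [blockStart_update_of_le le_rfl] at hx1
    rw [blockStart_update_of_le le_rfl, update_self] at hx2
    unfold succAbove
    split_ifs <;> constructor <;> omega
  · have h1 := blockStart_add_le_blockStart (a := a) h
    have h2 := blockStart_update_of_lt ha h
    rw [update_of_ne h.ne'] at hx2
    rw [succAbove_of_le (by omega)]
    constructor <;> omega

lemma mapsTo_predAbove_block (ha : a i = m + 1) {f : ℕ} (hf : f ∈ block a i) {t : Fin k}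
    (ht : t ≠ i) : MapsTo (predAbove f) (block a t) (block (update a i m) t) := by
  intro x hx
  obtain ⟨hf1, hf2⟩ := hf
  obtain ⟨hx1, hx2⟩ := hx
  rcases lt_or_gt_of_ne ht with h | h
  · have := blockStart_add_le_blockStart (a := a) h
    rw [predAbove, if_neg (by omega), block, blockStart_update_of_le h.le, update_of_ne h.ne]
    exact ⟨hx1, hx2⟩
  · have h1 := blockStart_add_le_blockStart (a := a) h
    have h2 := blockStart_update_of_lt ha h
    rw [predAbove, if_pos (by omega), block, update_of_ne h.ne']
    constructor <;> omega

end Shrink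

def blockCut {k : ℕ} (a : Fin k → ℕ) (i : Fin k) (π : Equiv.Perm (Fin (∑ t, a t))) : ℕ :=
  cutPoint (appl π) (blockStart a i) (blockStart a i + a i)

section Descending

variable {k m : ℕ} {a : Fin k → ℕ} {S : Finset (Fin k)} {i : Fin k} {f : ℕ}

lemma blockCut_update (σ : Equiv.Perm (Fin (∑ t, update a i m t))) :
    blockCut (update a i m) i σ = cutPoint (appl σ) (blockStart a i) (blockStart a i + m) := by
  rw [blockCut, blockStart_update_of_le le_rfl, update_self]

lemma blockCut_mem_block_and_fixed (hi : i ∈ S) {π : Equiv.Perm (Fin (∑ t, a t))}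
    (hπ : IsASPerm a S π) (h1 : fixInBlock a i π = 1) :
    blockCut a i π ∈ block a i ∧ appl π (blockCut a i π) = blockCut a i π := by
  obtain ⟨f, hf, hfix⟩ := exists_fixed_of_fixInBlock_eq_one h1
  rw [blockCut, cutPoint_eq_of_strictAntiOn ((isASPerm_iff.1 hπ i).1 hi) hf hfix]
  exact ⟨hf, hfix⟩

lemma isCut_blockCut_update (hi : i ∈ S) {σ : Equiv.Perm (Fin (∑ t, update a i m t))}
    (hσ : IsASPerm (update a i m) S σ) (h0 : fixInBlock (update a i m) i σ = 0) :
    IsCut (appl σ) (blockStart a i) (blockStart a i + m) (blockCut (update a i m) i σ) := by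
  have := isCut_cutPoint le_self_add ((isASPerm_iff.1 hσ i).1 hi).antitoneOn
    (fixInBlock_eq_zero_iff.1 h0)
  rwa [blockStart_update_of_le le_rfl, update_self, ← blockCut_update] at this

lemma mem_block_of_isCut (ha : a i = m + 1) {g : ℕ → ℕ}
    (h : IsCut g (blockStart a i) (blockStart a i + m) f) : f ∈ block a i := by
  rw [block_eq_Ico ha]
  exact ⟨h.1.1, Nat.lt_succ_of_le h.1.2⟩

variable (ha : a i = m + 1)

section Remove

variable {π : Equiv.Perm (Fin (∑ t, a t))} (hf : f ∈ block a i) (hfix : appl π f = f)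

lemma isASPerm_removePerm (hπ : IsASPerm a S π) :
    IsASPerm (update a i m) S
      (removePerm (sum_update_add_one ha) (lt_sum_of_mem_block hf) π hfix) := by
  rw [isASPerm_iff] at hπ ⊢
  intro t
  rw [appl_removePerm]
  have hmaps := mapsTo_succAbove_block ha hf t
  exact ⟨fun ht => strictAntiOn_removeFixed ((hπ t).1 ht) (appl_injective π) hfix hmaps,
    fun ht => strictMonoOn_removeFixed ((hπ t).2 ht) (appl_injective π) hfix hmaps⟩

lemma isCut_removePerm (hi : i ∈ S) (hπ : IsASPerm a S π) :
    IsCut (appl (removePerm (sum_update_add_one ha) (lt_sum_of_mem_block hf) π hfix))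
      (blockStart a i) (blockStart a i + m) f := by
  have hanti := (isASPerm_iff.1 hπ i).1 hi
  rw [block_eq_Ico ha] at hanti hf
  rw [appl_removePerm]
  exact isCut_removeFixed hanti hf hfix

lemma fixInBlock_removePerm (hi : i ∈ S) (hπ : IsASPerm a S π) :
    fixInBlock (update a i m) i
      (removePerm (sum_update_add_one ha) (lt_sum_of_mem_block hf) π hfix) = 0 :=
  fixInBlock_eq_zero_iff.2 fun _ hx =>
    (isCut_removePerm ha hf hfix hi hπ).apply_ne (block_update_self ▸ hx)

lemma blockCut_removePerm (hi : i ∈ S) (hπ : IsASPerm a S π) :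
    blockCut (update a i m) i
      (removePerm (sum_update_add_one ha) (lt_sum_of_mem_block hf) π hfix) = f := by
  rw [blockCut_update]
  exact (isCut_removePerm ha hf hfix hi hπ).cutPoint_eq

end Remove

section Insert

variable {σ : Equiv.Perm (Fin (∑ t, update a i m t))} (hf : f < ∑ t, a t)

lemma strictAntiOn_insertPerm (hi : i ∈ S) (hσ : IsASPerm (update a i m) S σ)
    (hcut : IsCut (appl σ) (blockStart a i) (blockStart a i + m) f) :
    StrictAntiOn (appl (insertPerm (sum_update_add_one ha) hf σ)) (block a i) := by
  have hanti := (isASPerm_iff.1 hσ i).1 hi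
  rw [block_update_self] at hanti
  rw [appl_insertPerm, block_eq_Ico ha]
  exact strictAntiOn_insertFixed_of_isCut hanti hcut

lemma isASPerm_insertPerm (hi : i ∈ S) (hσ : IsASPerm (update a i m) S σ)
    (hcut : IsCut (appl σ) (blockStart a i) (blockStart a i + m) f) :
    IsASPerm a S (insertPerm (sum_update_add_one ha) hf σ) := by
  rw [isASPerm_iff]
  intro t
  by_cases hti : t = i
  · subst hti
    exact ⟨fun _ => strictAntiOn_insertPerm ha hf hi hσ hcut, fun ht => absurd hi ht⟩
  · have hfi := mem_block_of_isCut ha hcut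
    have hmaps := mapsTo_predAbove_block ha hfi hti
    have hfnot : f ∉ block a t := fun h => hti (eq_of_mem_block h hfi)
    rw [isASPerm_iff] at hσ
    rw [appl_insertPerm]
    exact ⟨fun ht => strictAntiOn_insertFixed ((hσ t).1 ht) hmaps hfnot,
      fun ht => strictMonoOn_insertFixed ((hσ t).2 ht) hmaps hfnot⟩

lemma appl_insertPerm_self : appl (insertPerm (sum_update_add_one ha) hf σ) f = f := by
  rw [appl_insertPerm, insertFixed_self]

lemma blockCut_insertPerm (hi : i ∈ S) (hσ : IsASPerm (update a i m) S σ)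
    (hcut : IsCut (appl σ) (blockStart a i) (blockStart a i + m) f) :
    blockCut a i (insertPerm (sum_update_add_one ha) hf σ) = f :=
  cutPoint_eq_of_strictAntiOn (strictAntiOn_insertPerm ha hf hi hσ hcut)
    (mem_block_of_isCut ha hcut) (appl_insertPerm_self ha hf)

lemma fixInBlock_insertPerm (hi : i ∈ S) (hσ : IsASPerm (update a i m) S σ)
    (hcut : IsCut (appl σ) (blockStart a i) (blockStart a i + m) f) :
    fixInBlock a i (insertPerm (sum_update_add_one ha) hf σ) = 1 :=
  fixInBlock_eq_one (mem_block_of_isCut ha hcut) (appl_insertPerm_self ha hf) fun _ hy hfix =>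
    (cutPoint_eq_of_strictAntiOn (strictAntiOn_insertPerm ha hf hi hσ hcut) hy hfix).symm.trans
      (blockCut_insertPerm ha hf hi hσ hcut)

end Insert

noncomputable def removeBlockFixedPointEquiv (hi : i ∈ S) :
    {π : Equiv.Perm (Fin (∑ t, a t)) // IsASPerm a S π ∧ fixInBlock a i π = 1} ≃
      {σ : Equiv.Perm (Fin (∑ t, update a i m t)) //
        IsASPerm (update a i m) S σ ∧ fixInBlock (update a i m) i σ = 0} where
  toFun p :=
    have hf := blockCut_mem_block_and_fixed hi p.2.1 p.2.2
    ⟨removePerm (sum_update_add_one ha) (lt_sum_of_mem_block hf.1) p.1 hf.2,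
      isASPerm_removePerm ha hf.1 hf.2 p.2.1, fixInBlock_removePerm ha hf.1 hf.2 hi p.2.1⟩
  invFun q :=
    have hcut := isCut_blockCut_update hi q.2.1 q.2.2
    have hf := lt_sum_of_mem_block (mem_block_of_isCut ha hcut)
    ⟨insertPerm (sum_update_add_one ha) hf q.1, isASPerm_insertPerm ha hf hi q.2.1 hcut,
      fixInBlock_insertPerm ha hf hi q.2.1 hcut⟩
  left_inv p :=
    have hf := blockCut_mem_block_and_fixed hi p.2.1 p.2.2
    Subtype.ext <| by
      dsimp only
      exact insertPerm_removePerm _ _ _ _ _ (blockCut_removePerm ha hf.1 hf.2 hi p.2.1)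
  right_inv q :=
    have hcut := isCut_blockCut_update hi q.2.1 q.2.2
    have hf := lt_sum_of_mem_block (mem_block_of_isCut ha hcut)
    Subtype.ext <| by
      dsimp only
      exact removePerm_insertPerm _ _ _ _ _ (blockCut_insertPerm ha hf hi q.2.1 hcut)

end Descending

end BlockPerm

/-- For `i ∈ S` (a descending block), there is a bijection between
`(a₁,…,aᵢ,…,a_k,S)`-permutations with exactly one fixed point in `Aᵢ` and
`(a₁,…,aᵢ-1,…,a_k,S)`-permutations with no fixed points in `Aᵢ`. -/
theorem descending_block_fixed_point_bijection (k : ℕ) (a : Fin k → ℕ)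
    (S : Finset (Fin k)) (i : Fin k) (hi : i ∈ S) (ha : 1 ≤ a i) :
    Nonempty
      ({π : Equiv.Perm (Fin (∑ t, a t)) // IsASPerm a S π ∧ fixInBlock a i π = 1} ≃
       {π : Equiv.Perm (Fin (∑ t, Function.update a i (a i - 1) t)) //
          IsASPerm (Function.update a i (a i - 1)) S π ∧
          fixInBlock (Function.update a i (a i - 1)) i π = 0}) :=
  ⟨BlockPerm.removeBlockFixedPointEquiv (Nat.succ_pred_eq_of_pos ha).symm hi⟩
end

section
/- In the group algebra C[S_n], the element Q = Σ_{T ⊆ {1,…,n}} (−1)^{|T|} I(Sym({1,…,n}\T)) · ∏_{i=1}^k I(Sym(A_i ∩ T)) equals Σ_{π ∈ S_n} c(π)·π, where c(π) = 0 if π has an odd-length small cycle and c(π) = 2^m otherwise, m being the number of small cycles of π. -/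
/-- The `i`-th block as a finset of `Fin n`. -/
def blockFin {k : ℕ} (a : Fin k → ℕ) (i : Fin k) : Finset (Fin (∑ t, a t)) :=
  Finset.univ.filter (fun x => inBlock a i (x : ℕ))

/-- The small cycles of `π` of length `≥ 2`: cycle factors whose support lies
entirely within a single block. (Fixed points, i.e. small `1`-cycles, are
treated separately.) -/
def smallCycles {k : ℕ} (a : Fin k → ℕ) (π : Equiv.Perm (Fin (∑ t, a t))) :
    Finset (Equiv.Perm (Fin (∑ t, a t))) :=
  π.cycleFactorsFinset.filter (fun c => ∃ i, ∀ x ∈ c.support, inBlock a i (x : ℕ))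

/-- `c(π)`: zero if `π` has an odd-length small cycle (in particular, a fixed
point), and `2^m` otherwise, where `m` is the number of small cycles of `π`. -/
def cWeight {k : ℕ} (a : Fin k → ℕ) (π : Equiv.Perm (Fin (∑ t, a t))) : ℕ :=
  if (∃ x, π x = x) ∨ ∃ c ∈ smallCycles a π, Odd c.support.card then 0
  else 2 ^ (smallCycles a π).card

/-- `I(T) = ∑_{π ∈ T} π` for the naturally embedded `Sym(X) ⊆ S_n`, as an
element of the group algebra `ℂ[S_n]`. -/
noncomputable def symAlg {n : ℕ} (X : Finset (Fin n)) :
    MonoidAlgebra ℂ (Equiv.Perm (Fin n)) :=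
  ∑ π ∈ Finset.univ.filter (fun π : Equiv.Perm (Fin n) => ∀ x ∉ X, π x = x),
    MonoidAlgebra.single π 1

/-!
Label each point of `{0,…,n-1}` by `none` if it lies outside `T` and by its block otherwise.
The product `I(Sym(Tᶜ)) ∏ᵢ I(Sym(Aᵢ ∩ T))` is then the element sum of the permutations
preserving every label class, since each element of that Young subgroup factors uniquely as a
product of permutations of the single classes. So the coefficient of `π` in `Q` is
`∑ (-1)^|T|` over the `π`-invariant sets `T` on which `π` respects blocks, i.e. over the unions
of small orbits of `π` (fixed points and small cycles). Summing over subsets of these pairwise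
disjoint orbits gives `∏ (1 + (-1)^|O|)`, which is `0` if some small orbit is odd and
`2^m` otherwise.
-/
open Finset Equiv

section GroupAlgebra
variable (k : Type*) {G : Type*} [Semiring k]

noncomputable def elemSum (A : Finset G) : MonoidAlgebra k G :=
  ∑ g ∈ A, MonoidAlgebra.single g 1

variable {k}

theorem elemSum_mul_elemSum [Monoid G] {A B C : Finset G}
    (h : Set.BijOn (fun p : G × G => p.1 * p.2) (A ×ˢ B : Finset (G × G)) C) :
    elemSum k A * elemSum k B = elemSum k C := by
  simp only [elemSum, sum_mul_sum, MonoidAlgebra.single_mul_single, one_mul]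
  rw [← sum_product']
  exact sum_nbij (fun p => p.1 * p.2) (fun _ hp => h.mapsTo hp) h.injOn h.surjOn fun _ _ => rfl

theorem sum_smul_elemSum [Fintype G] [DecidableEq G] {ι : Type*} (s : Finset ι) (c : ι → k)
    (A : ι → Finset G) :
    ∑ i ∈ s, c i • elemSum k (A i)
      = ∑ g, (∑ i ∈ s with g ∈ A i, c i) • MonoidAlgebra.single g 1 := by
  simp only [elemSum, smul_sum, sum_smul]
  exact sum_comm' fun i g => by simp [and_comm]

end GroupAlgebra

section YoungPerms
variable {α β : Type*} [Fintype α] [DecidableEq α] [DecidableEq β]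

def symOn (X : Finset α) : Finset (Perm α) := {σ | ∀ x ∉ X, σ x = x}

/-- The Young subgroup `∏_{b ∈ L} Sym(ℓ⁻¹ b)`. -/
def youngPerms (ℓ : α → β) (L : List β) : Finset (Perm α) :=
  {σ | (∀ x, ℓ (σ x) = ℓ x) ∧ ∀ x, ℓ x ∉ L → σ x = x}

theorem apply_mem_iff_of_mem_symOn {X : Finset α} {σ : Perm α} (hσ : σ ∈ symOn X) (x : α) :
    σ x ∈ X ↔ x ∈ X := by
  have hfix : ∀ x ∉ X, σ x = x := (mem_filter.mp hσ).2
  by_cases hx : x ∈ X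
  · refine iff_of_true (by_contra fun h => h ?_) hx
    rwa [σ.injective (hfix _ h)]
  · rw [hfix x hx]

theorem youngPerms_nil (ℓ : α → β) : youngPerms ℓ [] = {1} := by
  ext σ
  simp only [youngPerms, mem_filter, mem_univ, true_and, List.not_mem_nil, not_false_eq_true,
    forall_const, mem_singleton]
  exact ⟨fun h => Equiv.ext h.2, fun h => by simp [h]⟩

theorem mem_youngPerms_of_forall_mem {ℓ : α → β} {L : List β} (hL : ∀ x, ℓ x ∈ L)
    {σ : Perm α} : σ ∈ youngPerms ℓ L ↔ ∀ x, ℓ (σ x) = ℓ x := by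
  simp [youngPerms, hL]

variable {ℓ : α → β} {b : β} {L : List β}

theorem label_apply_of_mem_symOn {σ : Perm α} (hσ : σ ∈ symOn {x | ℓ x = b}) (x : α) :
    ℓ (σ x) = ℓ x := by
  by_cases hx : ℓ x = b
  · simpa [hx] using (apply_mem_iff_of_mem_symOn hσ x).mpr (by simpa using hx)
  · rw [(mem_filter.mp hσ).2 x (by simpa using hx)]

theorem mul_apply_of_mem_symOn_of_mem_youngPerms (hb : b ∉ L) {σ τ : Perm α}
    (hσ : σ ∈ symOn {x | ℓ x = b}) (hτ : τ ∈ youngPerms ℓ L) (x : α) :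
    (σ * τ) x = if ℓ x = b then σ x else τ x := by
  have hτ' := (mem_filter.mp hτ).2
  split_ifs with hx
  · rw [Perm.mul_apply, hτ'.2 x (hx ▸ hb)]
  · exact (mem_filter.mp hσ).2 _ (by simpa [hτ'.1] using hx)

theorem mapsTo_mul_symOn_youngPerms (hb : b ∉ L) :
    Set.MapsTo (fun p : Perm α × Perm α => p.1 * p.2)
      (symOn {x | ℓ x = b} ×ˢ youngPerms ℓ L : Finset _) (youngPerms ℓ (b :: L)) := by
  rintro ⟨σ, τ⟩ hp
  obtain ⟨hσ, hτ⟩ := mem_product.mp hp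
  have hτ' := (mem_filter.mp hτ).2
  refine mem_filter.mpr ⟨mem_univ _, fun x => ?_, fun x hx => ?_⟩
  · rw [Perm.mul_apply, label_apply_of_mem_symOn hσ, hτ'.1]
  · rw [List.mem_cons, not_or] at hx
    rw [mul_apply_of_mem_symOn_of_mem_youngPerms hb hσ hτ, if_neg hx.1, hτ'.2 x hx.2]

theorem injOn_mul_symOn_youngPerms (hb : b ∉ L) :
    Set.InjOn (fun p : Perm α × Perm α => p.1 * p.2)
      (symOn {x | ℓ x = b} ×ˢ youngPerms ℓ L : Finset _) := by
  rintro ⟨σ, τ⟩ hp ⟨σ', τ'⟩ hp' h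
  obtain ⟨hσ, hτ⟩ := mem_product.mp hp
  obtain ⟨hσ', hτ'⟩ := mem_product.mp hp'
  have h' := fun x => (mul_apply_of_mem_symOn_of_mem_youngPerms hb hσ hτ x).symm.trans
    ((congrArg (· x) h).trans (mul_apply_of_mem_symOn_of_mem_youngPerms hb hσ' hτ' x))
  refine Prod.ext (Equiv.ext fun x => ?_) (Equiv.ext fun x => ?_) <;> by_cases hx : ℓ x = b
  · simpa [hx] using h' x
  · rw [(mem_filter.mp hσ).2 x (by simpa), (mem_filter.mp hσ').2 x (by simpa)]
  · rw [(mem_filter.mp hτ).2.2 x (hx ▸ hb), (mem_filter.mp hτ').2.2 x (hx ▸ hb)]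
  · simpa [hx] using h' x

theorem surjOn_mul_symOn_youngPerms (hb : b ∉ L) :
    Set.SurjOn (fun p : Perm α × Perm α => p.1 * p.2)
      (symOn {x | ℓ x = b} ×ˢ youngPerms ℓ L : Finset _) (youngPerms ℓ (b :: L)) := by
  intro ρ hρ
  have hρ' := (mem_filter.mp hρ).2
  have hρb : ∀ x, ℓ (ρ x) = b ↔ ℓ x = b := fun x => by rw [hρ'.1]
  let σ : Perm α := Perm.subtypeCongr (ρ.subtypePerm (p := (ℓ · = b)) hρb) 1
  let τ : Perm α :=
    Perm.subtypeCongr (p := (ℓ · = b)) 1 (ρ.subtypePerm fun x => not_congr (hρb x))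
  have hσ : σ ∈ symOn {x | ℓ x = b} := mem_filter.mpr ⟨mem_univ _, fun x hx =>
    Perm.subtypeCongr.right_apply (p := (ℓ · = b)) _ _ (by simpa using hx)⟩
  have hτ_apply : ∀ x, τ x = if ℓ x = b then x else ρ x := fun x => by
    split_ifs with hx
    · exact Perm.subtypeCongr.left_apply (p := (ℓ · = b)) _ _ hx
    · exact Perm.subtypeCongr.right_apply (p := (ℓ · = b)) _ _ hx
  have hτ : τ ∈ youngPerms ℓ L := by
    refine mem_filter.mpr ⟨mem_univ _, fun x => ?_, fun x hx => ?_⟩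
    · rw [hτ_apply]; split_ifs <;> simp [hρ'.1]
    · rw [hτ_apply]; split_ifs with hxb
      · rfl
      · exact hρ'.2 x (by simp [hxb, hx])
  refine ⟨(σ, τ), mem_product.mpr ⟨hσ, hτ⟩, Equiv.ext fun x => ?_⟩
  rw [mul_apply_of_mem_symOn_of_mem_youngPerms hb hσ hτ x]
  split_ifs with hx
  · exact Perm.subtypeCongr.left_apply (p := (ℓ · = b)) _ _ hx
  · rw [hτ_apply, if_neg hx]

theorem prod_map_elemSum_symOn_fiber (k : Type*) [Semiring k] (ℓ : α → β) {L : List β}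
    (hL : L.Nodup) :
    (L.map fun b => elemSum k (symOn {x | ℓ x = b})).prod = elemSum k (youngPerms ℓ L) := by
  induction L with
  | nil => simp [youngPerms_nil, elemSum, MonoidAlgebra.one_def]
  | cons b L ih =>
    rw [List.map_cons, List.prod_cons, ih hL.of_cons]
    have hb := (List.nodup_cons.mp hL).1
    exact elemSum_mul_elemSum ⟨mapsTo_mul_symOn_youngPerms hb, injOn_mul_symOn_youngPerms hb,
      surjOn_mul_symOn_youngPerms hb⟩

end YoungPerms

section DisjointPieces
variable {ι α : Type*} [DecidableEq α] {f : ι → Finset α} {P : Finset ι}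

theorem filter_subset_biUnion_eq (hdisj : (P : Set ι).PairwiseDisjoint f)
    (hne : ∀ i ∈ P, (f i).Nonempty) {S : Finset ι} (hS : S ⊆ P) :
    {i ∈ P | f i ⊆ S.biUnion f} = S := by
  ext i
  refine ⟨fun hi => ?_, fun hi => mem_filter.mpr ⟨hS hi, subset_biUnion_of_mem f hi⟩⟩
  obtain ⟨hiP, hsub⟩ := mem_filter.mp hi
  obtain ⟨y, hy⟩ := hne i hiP
  obtain ⟨j, hjS, hyj⟩ := mem_biUnion.mp (hsub hy)
  rwa [hdisj.elim_finset hiP (hS hjS) y hy hyj]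

theorem injOn_biUnion_powerset (hdisj : (P : Set ι).PairwiseDisjoint f)
    (hne : ∀ i ∈ P, (f i).Nonempty) :
    Set.InjOn (·.biUnion f) (P.powerset : Set (Finset ι)) := fun S hS S' hS' h => by
  rw [← filter_subset_biUnion_eq hdisj hne (mem_powerset.mp hS),
    ← filter_subset_biUnion_eq hdisj hne (mem_powerset.mp hS')]
  simp only [h]

theorem sum_powerset_neg_one_pow_card_biUnion [DecidableEq ι] {R : Type*} [CommRing R]
    (hdisj : (P : Set ι).PairwiseDisjoint f) :
    ∑ S ∈ P.powerset, (-1 : R) ^ (S.biUnion f).card = ∏ i ∈ P, (1 + (-1) ^ (f i).card) := by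
  simp_rw [add_comm (1 : R)]
  rw [prod_add (fun i => (-1 : R) ^ (f i).card) fun _ => 1]
  simp only [prod_const_one, mul_one]
  refine sum_congr rfl fun S hS => ?_
  rw [card_biUnion (hdisj.subset (mem_powerset.mp hS)), prod_pow_eq_pow_sum]

theorem sum_neg_one_pow_card_eq_prod [DecidableEq ι] {R : Type*} [CommRing R]
    {𝒯 : Finset (Finset α)} (hdisj : (P : Set ι).PairwiseDisjoint f)
    (hne : ∀ i ∈ P, (f i).Nonempty)
    (h𝒯 : ∀ T, T ∈ 𝒯 ↔ ∃ S ⊆ P, S.biUnion f = T) :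
    ∑ T ∈ 𝒯, (-1 : R) ^ T.card = ∏ i ∈ P, (1 + (-1) ^ (f i).card) := by
  have : 𝒯 = P.powerset.image (·.biUnion f) := by
    ext T
    simp [h𝒯]
  rw [this, sum_image (injOn_biUnion_powerset hdisj hne),
    sum_powerset_neg_one_pow_card_biUnion hdisj]

end DisjointPieces

section SmallCycles
variable {α ι : Type*} [Fintype α] [DecidableEq α] [DecidableEq ι]

def BlockInvariant (π : Perm α) (b : α → ι) (T : Finset α) : Prop :=
  ∀ x ∈ T, π x ∈ T ∧ b (π x) = b x

instance (π : Perm α) (b : α → ι) : DecidablePred (BlockInvariant π b) := fun T =>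
  inferInstanceAs (Decidable (∀ x ∈ T, π x ∈ T ∧ b (π x) = b x))

def smallCycleFactors [Fintype ι] (π : Perm α) (b : α → ι) : Finset (Perm α) :=
  {c ∈ π.cycleFactorsFinset | ∃ i, ∀ x ∈ c.support, b x = i}

/-- Indexes the orbits of `π` lying in a single block: fixed points by `Sum.inl`, small cycles
by `Sum.inr`. -/
def smallOrbits [Fintype ι] (π : Perm α) (b : α → ι) : Finset (α ⊕ Perm α) :=
  ({x | π x = x} : Finset α).disjSum (smallCycleFactors π b)

def orbitSupport : α ⊕ Perm α → Finset α := Sum.elim singleton Perm.support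

variable {π : Perm α} {b : α → ι}

omit [Fintype α] [DecidableEq α] [DecidableEq ι] in
theorem BlockInvariant.pow_apply {T : Finset α} (hT : BlockInvariant π b T) {x : α}
    (hx : x ∈ T) (m : ℕ) : (π ^ m) x ∈ T ∧ b ((π ^ m) x) = b x := by
  induction m with
  | zero => exact ⟨hx, rfl⟩
  | succ m ih =>
    rw [pow_succ', Perm.mul_apply]
    exact ⟨(hT _ ih.1).1, (hT _ ih.1).2.trans ih.2⟩

omit [DecidableEq ι] in
theorem apply_eq_of_mem_cycleFactorsFinset {c : Perm α} (hc : c ∈ π.cycleFactorsFinset)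
    {x : α} (hx : x ∈ c.support) : π x = c x :=
  ((Perm.mem_cycleFactorsFinset_iff.mp hc).2 x hx).symm

variable [Fintype ι]

theorem pairwiseDisjoint_orbitSupport :
    (smallOrbits π b : Set (α ⊕ Perm α)).PairwiseDisjoint orbitSupport := by
  have hfix : ∀ x, π x = x → ∀ c ∈ smallCycleFactors π b, Disjoint {x} c.support :=
    fun x hx c hc => disjoint_singleton_left.mpr fun hxc =>
      Perm.mem_support.mp (Perm.mem_cycleFactorsFinset_support_le (mem_filter.mp hc).1 hxc) hx
  rintro (x | c) hx (y | d) hy hne <;>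
    simp only [smallOrbits, mem_coe, inl_mem_disjSum, inr_mem_disjSum, mem_filter, mem_univ,
      true_and] at hx hy
  · exact disjoint_singleton.mpr fun h => hne (congrArg Sum.inl h)
  · exact hfix x hx d hy
  · exact (hfix y hy c hx).symm
  · exact (π.cycleFactorsFinset_pairwise_disjoint (mem_filter.mp hx).1 (mem_filter.mp hy).1
      fun h => hne (congrArg Sum.inr h)).disjoint_support

theorem orbitSupport_nonempty : ∀ i ∈ smallOrbits π b, (orbitSupport i).Nonempty
  | .inl x, _ => singleton_nonempty x
  | .inr _, hc => (Perm.mem_cycleFactorsFinset_iff.mp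
      (mem_filter.mp (inr_mem_disjSum.mp hc)).1).1.nonempty_support

theorem blockInvariant_biUnion {S : Finset (α ⊕ Perm α)} (hS : S ⊆ smallOrbits π b) :
    BlockInvariant π b (S.biUnion orbitSupport) := by
  intro x hx
  obtain ⟨i, hiS, hxi⟩ := mem_biUnion.mp hx
  rcases i with y | c
  · obtain rfl := mem_singleton.mp hxi
    rw [(mem_filter.mp (inl_mem_disjSum.mp (hS hiS))).2]
    exact ⟨hx, rfl⟩
  · obtain ⟨hc, j, hcj⟩ := mem_filter.mp (inr_mem_disjSum.mp (hS hiS))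
    have hcx : c x ∈ c.support := Perm.apply_mem_support.mpr hxi
    rw [apply_eq_of_mem_cycleFactorsFinset hc hxi]
    exact ⟨mem_biUnion.mpr ⟨_, hiS, hcx⟩, (hcj _ hcx).trans (hcj x hxi).symm⟩

theorem biUnion_filter_eq_of_blockInvariant {T : Finset α} (hT : BlockInvariant π b T) :
    {i ∈ smallOrbits π b | orbitSupport i ⊆ T}.biUnion orbitSupport = T := by
  refine (biUnion_subset.mpr fun i hi => (mem_filter.mp hi).2).antisymm fun x hx => ?_
  rw [mem_biUnion]
  by_cases hfix : π x = x
  · exact ⟨.inl x, mem_filter.mpr ⟨inl_mem_disjSum.mpr (by simpa using hfix),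
      singleton_subset_iff.mpr hx⟩, mem_singleton_self x⟩
  · have hxπ : x ∈ π.support := Perm.mem_support.mpr hfix
    have horbit : ∀ y ∈ (π.cycleOf x).support, y ∈ T ∧ b y = b x := fun y hy => by
      obtain ⟨m, rfl⟩ := (Perm.mem_support_cycleOf_iff.mp hy).1.exists_nat_pow_eq
      exact hT.pow_apply hx m
    refine ⟨.inr (π.cycleOf x), mem_filter.mpr ⟨inr_mem_disjSum.mpr (mem_filter.mpr
      ⟨Perm.cycleOf_mem_cycleFactorsFinset_iff.mpr hxπ, b x, fun y hy => (horbit y hy).2⟩),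
      fun y hy => (horbit y hy).1⟩, Perm.mem_support_cycleOf_iff.mpr ⟨.refl _ _, hxπ⟩⟩

theorem blockInvariant_iff {T : Finset α} :
    BlockInvariant π b T ↔ ∃ S ⊆ smallOrbits π b, S.biUnion orbitSupport = T :=
  ⟨fun hT => ⟨_, filter_subset _ _, biUnion_filter_eq_of_blockInvariant hT⟩,
    fun ⟨_, hS, hST⟩ => hST ▸ blockInvariant_biUnion hS⟩

theorem sum_neg_one_pow_card_blockInvariant {R : Type*} [CommRing R] (π : Perm α)
    (b : α → ι) :
    ∑ T with BlockInvariant π b T, (-1 : R) ^ T.card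
      = 0 ^ #{x | π x = x} * ∏ c ∈ smallCycleFactors π b, (1 + (-1) ^ c.support.card) := by
  rw [sum_neg_one_pow_card_eq_prod pairwiseDisjoint_orbitSupport orbitSupport_nonempty
    fun T => by rw [mem_filter, blockInvariant_iff, and_iff_right (mem_univ T)],
    smallOrbits, prod_disjSum]
  simp [orbitSupport]

end SmallCycles

section BlockLabel
variable {α ι : Type*} [Fintype α] [DecidableEq α]
variable {π : Perm α} {b : α → ι} {T : Finset α}

def blockLabel (b : α → ι) (T : Finset α) (x : α) : Option ι :=
  if x ∈ T then some (b x) else none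

omit [Fintype α] in
theorem forall_blockLabel_apply_eq_iff :
    (∀ x, blockLabel b T (π x) = blockLabel b T x) ↔ BlockInvariant π b T := by
  refine ⟨fun h x hx => ?_, fun hT x => ?_⟩
  · have := h x
    simp only [blockLabel, if_pos hx] at this
    split_ifs at this with hπx
    · exact ⟨hπx, Option.some_injective _ this⟩
  · by_cases hx : x ∈ T
    · simp [blockLabel, hx, hT x hx]
    · have hπx : π x ∉ T := fun h => by
        simpa [hx] using Perm.perm_symm_on_of_perm_on_finset (fun y hy => (hT y hy).1) h
      simp [blockLabel, hx, hπx]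

theorem filter_blockLabel_eq_none : ({x | blockLabel b T x = none} : Finset α) = Tᶜ := by
  ext x
  by_cases hx : x ∈ T <;> simp [blockLabel, hx]

end BlockLabel

section Blocks
variable {k : ℕ} (a : Fin k → ℕ)

theorem blockStart_eq_sum_castLE (i : Fin k) :
    blockStart a i = ∑ t : Fin i, a (Fin.castLE i.2.le t) := by
  have h : univ.map (Fin.castLEEmb i.2.le) = Iio i := by
    ext t
    simp only [mem_map, mem_univ, true_and, Fin.castLEEmb_apply, mem_Iio]
    exact ⟨fun ⟨s, hs⟩ => hs ▸ s.2, fun h => ⟨⟨t, h⟩, rfl⟩⟩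
  rw [blockStart, ← h, sum_map]
  rfl

theorem blockStart_add_le {i j : Fin k} (h : i < j) : blockStart a i + a i ≤ blockStart a j :=
  calc blockStart a i + a i = ∑ t ∈ Iic i, a t := by
        rw [← Iio_insert, sum_insert notMem_Iio_self, add_comm, blockStart]
    _ ≤ blockStart a j :=
        sum_le_sum_of_subset fun t ht => mem_Iio.mpr ((mem_Iic.mp ht).trans_lt h)

theorem inBlock_unique {i j : Fin k} {x : ℕ} (hi : inBlock a i x) (hj : inBlock a j x) :
    i = j := by
  by_contra hne
  unfold inBlock at hi hj
  rcases lt_or_gt_of_ne hne with h | h <;> have := blockStart_add_le a h <;> omega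

theorem exists_inBlock (x : Fin (∑ t, a t)) : ∃ i, inBlock a i x := by
  obtain ⟨⟨i, j⟩, rfl⟩ := finSigmaFinEquiv.surjective x
  refine ⟨i, ?_⟩
  simp only [inBlock, finSigmaFinEquiv_apply, ← blockStart_eq_sum_castLE]
  omega

noncomputable def blockOf (x : Fin (∑ t, a t)) : Fin k := (exists_inBlock a x).choose

theorem inBlock_iff_blockOf_eq {i : Fin k} {x : Fin (∑ t, a t)} :
    inBlock a i x ↔ blockOf a x = i :=
  ⟨fun h => inBlock_unique a (exists_inBlock a x).choose_spec h,
    fun h => h ▸ (exists_inBlock a x).choose_spec⟩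

theorem filter_blockLabel_eq_some (T : Finset (Fin (∑ t, a t))) (i : Fin k) :
    ({x | blockLabel (blockOf a) T x = some i} : Finset _) = blockFin a i ∩ T := by
  ext x
  by_cases hx : x ∈ T <;> simp [blockLabel, blockFin, hx, inBlock_iff_blockOf_eq]

theorem symAlg_eq_elemSum_symOn {n : ℕ} (X : Finset (Fin n)) :
    symAlg X = elemSum ℂ (symOn X) := by
  unfold symAlg elemSum symOn
  congr

theorem symAlg_mul_prod_eq_elemSum (T : Finset (Fin (∑ t, a t))) :
    symAlg Tᶜ * ((List.finRange k).map fun i => symAlg (blockFin a i ∩ T)).prod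
      = elemSum ℂ
          (youngPerms (blockLabel (blockOf a) T) (none :: (List.finRange k).map some)) := by
  rw [← prod_map_elemSum_symOn_fiber ℂ _ ((List.nodup_finRange k).map (Option.some_injective _)
    |>.cons (by simp)), List.map_cons, List.prod_cons, List.map_map, filter_blockLabel_eq_none]
  simp only [Function.comp_def, filter_blockLabel_eq_some, symAlg_eq_elemSum_symOn]

theorem mem_youngPerms_blockLabel_iff (T : Finset (Fin (∑ t, a t)))
    {π : Perm (Fin (∑ t, a t))} :
    π ∈ youngPerms (blockLabel (blockOf a) T) (none :: (List.finRange k).map some)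
      ↔ BlockInvariant π (blockOf a) T :=
  (mem_youngPerms_of_forall_mem fun x => by cases blockLabel (blockOf a) T x <;> simp).trans
    forall_blockLabel_apply_eq_iff

theorem smallCycles_eq_smallCycleFactors (π : Perm (Fin (∑ t, a t))) :
    smallCycles a π = smallCycleFactors π (blockOf a) := by
  ext c
  simp only [smallCycles, smallCycleFactors, mem_filter, inBlock_iff_blockOf_eq]

theorem cWeight_eq {R : Type*} [CommRing R] (π : Perm (Fin (∑ t, a t))) :
    (cWeight a π : R)
      = 0 ^ #{x | π x = x} * ∏ c ∈ smallCycles a π, (1 + (-1) ^ c.support.card) := by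
  unfold cWeight
  split_ifs with h
  · rcases h with ⟨x, hx⟩ | ⟨c, hc, hodd⟩
    · rw [zero_pow (card_ne_zero_of_mem (s := {y | π y = y}) (by simpa using hx)), zero_mul,
        Nat.cast_zero]
    · rw [prod_eq_zero hc (by rw [hodd.neg_one_pow, add_neg_cancel]), mul_zero, Nat.cast_zero]
  · push Not at h
    rw [filter_false_of_mem fun x _ => h.1 x, card_empty, pow_zero, one_mul,
      prod_congr rfl fun c hc => by rw [(Nat.not_odd_iff_even.mp (h.2 c hc)).neg_one_pow],
      prod_const]
    push_cast
    ring

end Blocks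

/-- In `ℂ[S_n]`,
`Q = ∑_T (-1)^{|T|} I(Sym({1,…,n}\T)) ∏ᵢ I(Sym(Aᵢ ∩ T)) = ∑_π c(π)·π`. -/
theorem group_algebra_identity (k : ℕ) (a : Fin k → ℕ) :
    ∑ T : Finset (Fin (∑ t, a t)),
      ((-1 : ℂ) ^ T.card) •
        (symAlg Tᶜ * ((List.finRange k).map (fun i => symAlg (blockFin a i ∩ T))).prod)
    = ∑ π : Equiv.Perm (Fin (∑ t, a t)),
        (cWeight a π : ℂ) • MonoidAlgebra.single π 1 := by
  simp_rw [symAlg_mul_prod_eq_elemSum, sum_smul_elemSum]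
  refine sum_congr rfl fun π _ => ?_
  rw [filter_congr fun T _ => mem_youngPerms_blockLabel_iff a T,
    sum_neg_one_pow_card_blockInvariant, cWeight_eq, smallCycles_eq_smallCycleFactors]
end
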